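/- arXiv:1812.11367 — 3 statements merged into one kernel-verified Lean document; each statement's English description precedes it below -/
import Mathlib

section
/- Let f : [0,T) × [0,1] → ℝⁿ be a smooth solution of ∂ₜf = −∇ₛ²κ + λ(t)κ − ½|κ|²κ + φτ on (0,T) × [0,1] (φ a smooth scalar function, λ : [0,T) → ℝ), subject to the boundary conditions f(t,1) = P for a fixed point P ∈ ℝⁿ and κ(t,1) = 0 for all t. Then φ(t,1) = 0 and ∇ₛ^{2l}κ(t,1) = 0 for every l ∈ ℕ₀ and every t ∈ (0,T). -/
open Set MeasureTheory
open scoped RealInnerProductSpace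

noncomputable section

/-- Arc-length derivative `∂ₛ g = |∂ₓ f|⁻¹ ∂ₓ g` along the curve `f`. -/
def sDeriv {n : ℕ} {F : Type*} [NormedAddCommGroup F] [NormedSpace ℝ F]
    (f : ℝ → EuclideanSpace ℝ (Fin n)) (g : ℝ → F) (x : ℝ) : F :=
  ‖deriv f x‖⁻¹ • deriv g x

/-- The unit tangent `τ = ∂ₛ f`. -/
def tau {n : ℕ} (f : ℝ → EuclideanSpace ℝ (Fin n)) : ℝ → EuclideanSpace ℝ (Fin n) :=
  sDeriv f f

/-- The curvature vector `κ = ∂ₛ² f`. -/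
def kappa {n : ℕ} (f : ℝ → EuclideanSpace ℝ (Fin n)) : ℝ → EuclideanSpace ℝ (Fin n) :=
  sDeriv f (tau f)

/-- Normal projection of the arc-length derivative: `∇ₛψ = ∂ₛψ − ⟨∂ₛψ, τ⟩ τ`. -/
def nablaS {n : ℕ} (f ψ : ℝ → EuclideanSpace ℝ (Fin n)) (x : ℝ) :
    EuclideanSpace ℝ (Fin n) :=
  sDeriv f ψ x - ⟪sDeriv f ψ x, tau f x⟫ • tau f x

/-- Iterated normal arc-length derivative `∇ₛ^m`. -/
def nablaSIter {n : ℕ} (f : ℝ → EuclideanSpace ℝ (Fin n)) :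
    ℕ → (ℝ → EuclideanSpace ℝ (Fin n)) → ℝ → EuclideanSpace ℝ (Fin n)
  | 0, ψ => ψ
  | m + 1, ψ => nablaS f (nablaSIter f m ψ)

/-- Partial time derivative of a time-dependent field. -/
def pT {F : Type*} [NormedAddCommGroup F] [NormedSpace ℝ F]
    (g : ℝ → ℝ → F) (t x : ℝ) : F :=
  deriv (fun s => g s x) t

/-!
Write `B m = ∇ₛ^m κ`. Along a flow `∂ₜf = V + φτ` whose normal velocity
`V = -B 2 + λκ - ½|κ|²κ` has leading term `-B 2`, the commutation rules for `∂ₜ` and `∂ₛ` give,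
by induction on `m`, `∇ₜ B m = -B (m + 4) + φ B (m + 1) + R`, where `R` is a sum of terms `a • B e`
with `a` a product of `λ` and of scalars `⟪B c, B d⟫`, homogeneous of weight `m + 5` when `B c`
has weight `c + 1` and `λ` has weight `2`.

At the fixed end `∂ₜf = 0`, so with `κ = 0` the flow equation reads `B 2 = φτ`; as `B 2` is
normal, `φ = 0 = B 2` there. If all `B e` of even order `e ≤ 2l + 2` vanish at the end for all
times, then so does `∇ₜ B (2l)`, and every term of the odd-weight remainder `R` contains a factor
`B e` of even order `e ≤ 2l + 2`; hence `B (2l + 4) = 0` at the end.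
-/

open scoped ContDiff Topology

namespace CurveFlow

section PartialDerivatives

variable {G : Type*} [NormedAddCommGroup G] [NormedSpace ℝ G] {g g' : ℝ × ℝ → G} {p : ℝ × ℝ}

/-- Families of curves are maps `(t, x) ↦ F (t, x)`; partial derivatives are derivatives of
slices, so that for `F = uncurry f` they are definitionally `deriv (f t) x` and `pT f t x`. -/
def derivX (g : ℝ × ℝ → G) (p : ℝ × ℝ) : G := deriv (fun x => g (p.1, x)) p.2

def derivT (g : ℝ × ℝ → G) (p : ℝ × ℝ) : G := deriv (fun t => g (t, p.2)) p.1

theorem derivX_eq_fderiv (hg : DifferentiableAt ℝ g p) : derivX g p = fderiv ℝ g p (0, 1) :=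
  (hg.hasFDerivAt.comp_hasDerivAt (l := g) p.2
    ((hasDerivAt_const _ _).prodMk (hasDerivAt_id _))).deriv

theorem derivT_eq_fderiv (hg : DifferentiableAt ℝ g p) : derivT g p = fderiv ℝ g p (1, 0) :=
  (hg.hasFDerivAt.comp_hasDerivAt (l := g) p.1
    ((hasDerivAt_id _).prodMk (hasDerivAt_const _ _))).deriv

theorem hasDerivAt_derivX (hg : DifferentiableAt ℝ g p) :
    HasDerivAt (fun x => g (p.1, x)) (derivX g p) p.2 :=
  (hg.comp p.2 ((differentiableAt_const _).prodMk differentiableAt_id)).hasDerivAt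

theorem hasDerivAt_derivT (hg : DifferentiableAt ℝ g p) :
    HasDerivAt (fun t => g (t, p.2)) (derivT g p) p.1 :=
  (hg.comp p.1 (differentiableAt_id.prodMk (differentiableAt_const _))).hasDerivAt

theorem derivX_congr {s : Set (ℝ × ℝ)} (hs : IsOpen s) (hp : p ∈ s) (h : EqOn g g' s) :
    derivX g p = derivX g' p := by
  have hmem : ∀ᶠ x in 𝓝 p.2, (p.1, x) ∈ s :=
    (continuous_const.prodMk continuous_id).continuousAt.preimage_mem_nhds (hs.mem_nhds hp)
  exact Filter.EventuallyEq.deriv_eq (hmem.mono fun _ hx => h hx)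

theorem derivT_congr {s : Set (ℝ × ℝ)} (hs : IsOpen s) (hp : p ∈ s) (h : EqOn g g' s) :
    derivT g p = derivT g' p := by
  have hmem : ∀ᶠ t in 𝓝 p.1, (t, p.2) ∈ s :=
    (continuous_id.prodMk continuous_const).continuousAt.preimage_mem_nhds (hs.mem_nhds hp)
  exact Filter.EventuallyEq.deriv_eq (hmem.mono fun _ hx => h hx)

theorem derivT_eq_zero_of_eventually_eq {c : G} (h : ∀ᶠ t in 𝓝 p.1, g (t, p.2) = c) :
    derivT g p = 0 :=
  (Filter.EventuallyEq.deriv_eq h).trans (deriv_const _ _)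

theorem contDiffOn_derivX {s : Set (ℝ × ℝ)} (hs : IsOpen s) (hg : ContDiffOn ℝ ∞ g s) :
    ContDiffOn ℝ ∞ (derivX g) s :=
  ((hg.fderiv_of_isOpen hs le_rfl).clm_apply contDiffOn_const).congr fun _ hq =>
    derivX_eq_fderiv ((hg.contDiffAt (hs.mem_nhds hq)).differentiableAt (by simp))

theorem contDiffOn_derivT {s : Set (ℝ × ℝ)} (hs : IsOpen s) (hg : ContDiffOn ℝ ∞ g s) :
    ContDiffOn ℝ ∞ (derivT g) s :=
  ((hg.fderiv_of_isOpen hs le_rfl).clm_apply contDiffOn_const).congr fun _ hq =>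
    derivT_eq_fderiv ((hg.contDiffAt (hs.mem_nhds hq)).differentiableAt (by simp))

theorem derivT_derivX {s : Set (ℝ × ℝ)} (hs : IsOpen s) (hg : ContDiffOn ℝ ∞ g s) (hp : p ∈ s) :
    derivT (derivX g) p = derivX (derivT g) p := by
  have hdiff : ∀ q ∈ s, DifferentiableAt ℝ g q := fun q hq =>
    (hg.contDiffAt (hs.mem_nhds hq)).differentiableAt (by simp)
  have hg' : ContDiffOn ℝ ∞ (fderiv ℝ g) s := hg.fderiv_of_isOpen hs le_rfl
  have hd' : DifferentiableAt ℝ (fderiv ℝ g) p :=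
    (hg'.contDiffAt (hs.mem_nhds hp)).differentiableAt (by simp)
  have hsymm : IsSymmSndFDerivAt ℝ g p :=
    (hg.contDiffAt (hs.mem_nhds hp)).isSymmSndFDerivAt
      (by simp only [minSmoothness_of_isRCLikeNormedField]; norm_cast)
  rw [derivT_congr hs hp fun q hq => derivX_eq_fderiv (hdiff q hq),
    derivX_congr hs hp fun q hq => derivT_eq_fderiv (hdiff q hq),
    derivT_eq_fderiv (hd'.clm_apply (differentiableAt_const _)),
    derivX_eq_fderiv (hd'.clm_apply (differentiableAt_const _)),
    fderiv_clm_apply hd' (differentiableAt_const _),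
    fderiv_clm_apply hd' (differentiableAt_const _)]
  simpa using hsymm (1, 0) (0, 1)

section Rules

variable {E : Type*} [NormedAddCommGroup E] [InnerProductSpace ℝ E]
  {a : ℝ × ℝ → ℝ} {u w : ℝ × ℝ → E}

theorem derivX_add (hg : DifferentiableAt ℝ g p) (hg' : DifferentiableAt ℝ g' p) :
    derivX (fun q => g q + g' q) p = derivX g p + derivX g' p :=
  ((hasDerivAt_derivX hg).add (hasDerivAt_derivX hg')).deriv

theorem derivX_sub (hg : DifferentiableAt ℝ g p) (hg' : DifferentiableAt ℝ g' p) :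
    derivX (fun q => g q - g' q) p = derivX g p - derivX g' p :=
  ((hasDerivAt_derivX hg).sub (hasDerivAt_derivX hg')).deriv

theorem derivX_smul (ha : DifferentiableAt ℝ a p) (hg : DifferentiableAt ℝ g p) :
    derivX (fun q => a q • g q) p = a p • derivX g p + derivX a p • g p :=
  ((hasDerivAt_derivX ha).smul (hasDerivAt_derivX hg)).deriv

theorem derivX_inner (hu : DifferentiableAt ℝ u p) (hw : DifferentiableAt ℝ w p) :
    derivX (fun q => ⟪u q, w q⟫) p = ⟪u p, derivX w p⟫ + ⟪derivX u p, w p⟫ :=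
  ((hasDerivAt_derivX hu).inner ℝ (hasDerivAt_derivX hw)).deriv

theorem derivX_const (c : G) : derivX (fun _ => c) p = 0 := deriv_const _ _

theorem derivT_add (hg : DifferentiableAt ℝ g p) (hg' : DifferentiableAt ℝ g' p) :
    derivT (fun q => g q + g' q) p = derivT g p + derivT g' p :=
  ((hasDerivAt_derivT hg).add (hasDerivAt_derivT hg')).deriv

theorem derivT_smul (ha : DifferentiableAt ℝ a p) (hg : DifferentiableAt ℝ g p) :
    derivT (fun q => a q • g q) p = a p • derivT g p + derivT a p • g p :=
  ((hasDerivAt_derivT ha).smul (hasDerivAt_derivT hg)).deriv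

theorem derivT_inner (hu : DifferentiableAt ℝ u p) (hw : DifferentiableAt ℝ w p) :
    derivT (fun q => ⟪u q, w q⟫) p = ⟪u p, derivT w p⟫ + ⟪derivT u p, w p⟫ :=
  ((hasDerivAt_derivT hu).inner ℝ (hasDerivAt_derivT hw)).deriv

theorem hasDerivAt_norm {c : ℝ → E} {c' : E} {x : ℝ} (hc : HasDerivAt c c' x) (h0 : c x ≠ 0) :
    HasDerivAt (fun y => ‖c y‖) (‖c x‖⁻¹ * ⟪c x, c'⟫) x := by
  have hpos : 0 < ‖c x‖ := norm_pos_iff.2 h0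
  have hsqrt := hc.norm_sq.sqrt (by positivity)
  simp only [Real.sqrt_sq (norm_nonneg _)] at hsqrt
  convert hsqrt using 1
  field_simp

theorem derivT_inv_norm (hu : DifferentiableAt ℝ u p) (h0 : u p ≠ 0) :
    derivT (fun q => ‖u q‖⁻¹) p = -(‖u p‖ ^ 3)⁻¹ * ⟪u p, derivT u p⟫ := by
  have hpos : 0 < ‖u p‖ := norm_pos_iff.2 h0
  have h := ((hasDerivAt_norm (hasDerivAt_derivT hu) h0).inv hpos.ne').deriv
  simp only [Prod.mk.eta] at h
  rw [derivT, show (fun t => ‖u (t, p.2)‖⁻¹) = (fun t => ‖u (t, p.2)‖)⁻¹ from rfl, h]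
  field_simp

end Rules

end PartialDerivatives

section Geometry

variable {E : Type*} [NormedAddCommGroup E] [InnerProductSpace ℝ E]
  {G : Type*} [NormedAddCommGroup G] [NormedSpace ℝ G]

def arcDeriv (F : ℝ × ℝ → E) (g : ℝ × ℝ → G) (p : ℝ × ℝ) : G :=
  ‖derivX F p‖⁻¹ • derivX g p

def tangent (F : ℝ × ℝ → E) : ℝ × ℝ → E := arcDeriv F F

def regularSet (F : ℝ × ℝ → E) : Set (ℝ × ℝ) := {p | derivX F p ≠ 0}

def normalPart (F : ℝ × ℝ → E) (p : ℝ × ℝ) (v : E) : E :=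
  v - ⟪v, tangent F p⟫ • tangent F p

def normalDeriv (F ψ : ℝ × ℝ → E) (p : ℝ × ℝ) : E := normalPart F p (arcDeriv F ψ p)

def curvatureDeriv (F : ℝ × ℝ → E) : ℕ → ℝ × ℝ → E
  | 0 => arcDeriv F (tangent F)
  | m + 1 => normalDeriv F (curvatureDeriv F m)

def normalTimeDeriv (F ψ : ℝ × ℝ → E) (p : ℝ × ℝ) : E := normalPart F p (derivT ψ p)

variable {F : ℝ × ℝ → E} {p : ℝ × ℝ}

section NormalPart

theorem normalPart_add (v w : E) :
    normalPart F p (v + w) = normalPart F p v + normalPart F p w := by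
  simp only [normalPart, inner_add_left, add_smul]; abel

theorem normalPart_sub (v w : E) :
    normalPart F p (v - w) = normalPart F p v - normalPart F p w := by
  simp only [normalPart, inner_sub_left, sub_smul]; abel

theorem normalPart_smul (r : ℝ) (v : E) : normalPart F p (r • v) = r • normalPart F p v := by
  simp only [normalPart, real_inner_smul_left, smul_sub, mul_smul]

theorem norm_tangent (hp : p ∈ regularSet F) : ‖tangent F p‖ = 1 := by
  rw [tangent, arcDeriv, norm_smul, norm_inv, norm_norm, inv_mul_cancel₀ (norm_ne_zero_iff.2 hp)]

theorem inner_tangent_self (hp : p ∈ regularSet F) : ⟪tangent F p, tangent F p⟫ = 1 := by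
  rw [real_inner_self_eq_norm_sq, norm_tangent hp, one_pow]

theorem inner_normalPart_tangent (hp : p ∈ regularSet F) (v : E) :
    ⟪normalPart F p v, tangent F p⟫ = 0 := by
  rw [normalPart, inner_sub_left, real_inner_smul_left, inner_tangent_self hp, mul_one, sub_self]

theorem normalPart_eq_self {v : E} (hv : ⟪v, tangent F p⟫ = 0) : normalPart F p v = v := by
  rw [normalPart, hv, zero_smul, sub_zero]

theorem normalPart_smul_tangent (hp : p ∈ regularSet F) (r : ℝ) :
    normalPart F p (r • tangent F p) = 0 := by
  rw [normalPart_smul, normalPart, inner_tangent_self hp, one_smul, sub_self, smul_zero]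

end NormalPart

section Smoothness

theorem isOpen_regularSet (hF : ContDiff ℝ ∞ F) : IsOpen (regularSet F) :=
  isOpen_compl_singleton.preimage <|
    continuousOn_univ.1 (contDiffOn_derivX isOpen_univ hF.contDiffOn).continuousOn

theorem differentiableAt_of_contDiffOn_regularSet {g : ℝ × ℝ → G} (hF : ContDiff ℝ ∞ F)
    (hg : ContDiffOn ℝ ∞ g (regularSet F)) (hp : p ∈ regularSet F) : DifferentiableAt ℝ g p :=
  (hg.differentiableOn (by simp)).differentiableAt ((isOpen_regularSet hF).mem_nhds hp)

theorem contDiffOn_inv_norm_derivX (hF : ContDiff ℝ ∞ F) :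
    ContDiffOn ℝ ∞ (fun q => ‖derivX F q‖⁻¹) (regularSet F) :=
  (((contDiffOn_derivX isOpen_univ hF.contDiffOn).mono (subset_univ _)).norm ℝ fun _ hq => hq).inv
    fun _ hq => norm_ne_zero_iff.2 hq

theorem contDiffOn_arcDeriv {g : ℝ × ℝ → G} (hF : ContDiff ℝ ∞ F)
    (hg : ContDiffOn ℝ ∞ g (regularSet F)) : ContDiffOn ℝ ∞ (arcDeriv F g) (regularSet F) :=
  (contDiffOn_inv_norm_derivX hF).smul (contDiffOn_derivX (isOpen_regularSet hF) hg)

theorem contDiffOn_tangent (hF : ContDiff ℝ ∞ F) : ContDiffOn ℝ ∞ (tangent F) (regularSet F) :=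
  contDiffOn_arcDeriv hF hF.contDiffOn

theorem contDiffOn_normalPart {χ : ℝ × ℝ → E} (hF : ContDiff ℝ ∞ F)
    (hχ : ContDiffOn ℝ ∞ χ (regularSet F)) :
    ContDiffOn ℝ ∞ (fun q => normalPart F q (χ q)) (regularSet F) :=
  hχ.sub ((hχ.inner ℝ (contDiffOn_tangent hF)).smul (contDiffOn_tangent hF))

theorem contDiffOn_normalDeriv {ψ : ℝ × ℝ → E} (hF : ContDiff ℝ ∞ F)
    (hψ : ContDiffOn ℝ ∞ ψ (regularSet F)) : ContDiffOn ℝ ∞ (normalDeriv F ψ) (regularSet F) :=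
  contDiffOn_normalPart hF (contDiffOn_arcDeriv hF hψ)

theorem contDiffOn_curvatureDeriv (hF : ContDiff ℝ ∞ F) (m : ℕ) :
    ContDiffOn ℝ ∞ (curvatureDeriv F m) (regularSet F) := by
  induction m with
  | zero => exact contDiffOn_arcDeriv hF (contDiffOn_tangent hF)
  | succ m ih => exact contDiffOn_normalDeriv hF ih

theorem contDiffOn_normalTimeDeriv {ψ : ℝ × ℝ → E} (hF : ContDiff ℝ ∞ F)
    (hψ : ContDiffOn ℝ ∞ ψ (regularSet F)) :
    ContDiffOn ℝ ∞ (normalTimeDeriv F ψ) (regularSet F) :=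
  contDiffOn_normalPart hF (contDiffOn_derivT (isOpen_regularSet hF) hψ)

end Smoothness

section ArcDeriv

variable {g g' : ℝ × ℝ → G} {a : ℝ × ℝ → ℝ} {u w : ℝ × ℝ → E}

theorem arcDeriv_add (hg : DifferentiableAt ℝ g p) (hg' : DifferentiableAt ℝ g' p) :
    arcDeriv F (fun q => g q + g' q) p = arcDeriv F g p + arcDeriv F g' p := by
  rw [arcDeriv, derivX_add hg hg', smul_add]; rfl

theorem arcDeriv_sub (hg : DifferentiableAt ℝ g p) (hg' : DifferentiableAt ℝ g' p) :
    arcDeriv F (fun q => g q - g' q) p = arcDeriv F g p - arcDeriv F g' p := by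
  rw [arcDeriv, derivX_sub hg hg', smul_sub]; rfl

theorem arcDeriv_smul (ha : DifferentiableAt ℝ a p) (hg : DifferentiableAt ℝ g p) :
    arcDeriv F (fun q => a q • g q) p = a p • arcDeriv F g p + arcDeriv F a p • g p := by
  rw [arcDeriv, derivX_smul ha hg, smul_add, smul_comm, arcDeriv, arcDeriv, smul_assoc]

theorem arcDeriv_inner (hu : DifferentiableAt ℝ u p) (hw : DifferentiableAt ℝ w p) :
    arcDeriv F (fun q => ⟪u q, w q⟫) p = ⟪u p, arcDeriv F w p⟫ + ⟪arcDeriv F u p, w p⟫ := by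
  rw [arcDeriv, derivX_inner hu hw, arcDeriv, arcDeriv, real_inner_smul_left,
    real_inner_smul_right, smul_eq_mul]
  ring

theorem arcDeriv_const (c : G) : arcDeriv F (fun _ => c) p = 0 := by
  rw [arcDeriv, derivX_const, smul_zero]

theorem arcDeriv_comp_fst (h : ℝ → G) : arcDeriv F (fun q => h q.1) p = 0 :=
  arcDeriv_const (h p.1)

theorem derivX_eq_norm_smul_arcDeriv (hp : p ∈ regularSet F) (g : ℝ × ℝ → G) :
    derivX g p = ‖derivX F p‖ • arcDeriv F g p := by
  rw [arcDeriv, smul_smul, mul_inv_cancel₀ (norm_ne_zero_iff.2 hp), one_smul]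

theorem arcDeriv_congr {s : Set (ℝ × ℝ)} (hs : IsOpen s) (hp : p ∈ s) (h : EqOn g g' s) :
    arcDeriv F g p = arcDeriv F g' p := by
  rw [arcDeriv, arcDeriv, derivX_congr hs hp h]

end ArcDeriv

section Normality

theorem inner_arcDeriv_add_inner_arcDeriv_eq_zero (hF : ContDiff ℝ ∞ F) {u w : ℝ × ℝ → E}
    (hu : ContDiffOn ℝ ∞ u (regularSet F)) (hw : ContDiffOn ℝ ∞ w (regularSet F)) {c : ℝ}
    (h : ∀ q ∈ regularSet F, ⟪u q, w q⟫ = c) (hp : p ∈ regularSet F) :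
    ⟪arcDeriv F u p, w p⟫ + ⟪u p, arcDeriv F w p⟫ = 0 := by
  have hd := arcDeriv_inner (F := F) (differentiableAt_of_contDiffOn_regularSet hF hu hp)
    (differentiableAt_of_contDiffOn_regularSet hF hw hp)
  rw [arcDeriv_congr (g' := fun _ => c) (isOpen_regularSet hF) hp h, arcDeriv_const] at hd
  linarith

theorem inner_derivT_add_inner_derivT_eq_zero (hF : ContDiff ℝ ∞ F) {u w : ℝ × ℝ → E}
    (hu : ContDiffOn ℝ ∞ u (regularSet F)) (hw : ContDiffOn ℝ ∞ w (regularSet F)) {c : ℝ}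
    (h : ∀ q ∈ regularSet F, ⟪u q, w q⟫ = c) (hp : p ∈ regularSet F) :
    ⟪derivT u p, w p⟫ + ⟪u p, derivT w p⟫ = 0 := by
  have hd := derivT_inner (differentiableAt_of_contDiffOn_regularSet hF hu hp)
    (differentiableAt_of_contDiffOn_regularSet hF hw hp)
  rw [derivT_congr (g' := fun _ => c) (isOpen_regularSet hF) hp h] at hd
  have : derivT (fun _ => c) p = 0 := deriv_const _ _
  linarith

theorem inner_curvatureDeriv_tangent (hF : ContDiff ℝ ∞ F) (m : ℕ) (hp : p ∈ regularSet F) :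
    ⟪curvatureDeriv F m p, tangent F p⟫ = 0 := by
  cases m with
  | zero =>
    have h := inner_arcDeriv_add_inner_arcDeriv_eq_zero hF (contDiffOn_tangent hF)
      (contDiffOn_tangent hF) (fun q hq => inner_tangent_self hq) hp
    have hcomm := real_inner_comm (tangent F p) (arcDeriv F (tangent F) p)
    change ⟪arcDeriv F (tangent F) p, tangent F p⟫ = 0
    linarith
  | succ m => exact inner_normalPart_tangent hp _

theorem inner_arcDeriv_tangent (hF : ContDiff ℝ ∞ F) {ψ : ℝ × ℝ → E}
    (hψ : ContDiffOn ℝ ∞ ψ (regularSet F)) (hψn : ∀ q ∈ regularSet F, ⟪ψ q, tangent F q⟫ = 0)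
    (hp : p ∈ regularSet F) :
    ⟪arcDeriv F ψ p, tangent F p⟫ = -⟪ψ p, curvatureDeriv F 0 p⟫ := by
  have h := inner_arcDeriv_add_inner_arcDeriv_eq_zero hF hψ (contDiffOn_tangent hF) hψn hp
  change _ + ⟪ψ p, curvatureDeriv F 0 p⟫ = 0 at h
  linarith

theorem normalDeriv_eq_of_normal (hF : ContDiff ℝ ∞ F) {ψ : ℝ × ℝ → E}
    (hψ : ContDiffOn ℝ ∞ ψ (regularSet F)) (hψn : ∀ q ∈ regularSet F, ⟪ψ q, tangent F q⟫ = 0)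
    (hp : p ∈ regularSet F) :
    normalDeriv F ψ p = arcDeriv F ψ p + ⟪ψ p, curvatureDeriv F 0 p⟫ • tangent F p := by
  rw [normalDeriv, normalPart, inner_arcDeriv_tangent hF hψ hψn hp, neg_smul, sub_neg_eq_add]

theorem arcDeriv_inner_curvatureDeriv (hF : ContDiff ℝ ∞ F) (c d : ℕ) (hp : p ∈ regularSet F) :
    arcDeriv F (fun q => ⟪curvatureDeriv F c q, curvatureDeriv F d q⟫) p
      = ⟪curvatureDeriv F (c + 1) p, curvatureDeriv F d p⟫
        + ⟪curvatureDeriv F c p, curvatureDeriv F (d + 1) p⟫ := by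
  have hB (m : ℕ) := normalDeriv_eq_of_normal hF (contDiffOn_curvatureDeriv hF m)
    (fun q hq => inner_curvatureDeriv_tangent hF m hq) hp
  have hd (m : ℕ) :=
    differentiableAt_of_contDiffOn_regularSet hF (contDiffOn_curvatureDeriv hF m) hp
  have hn (m : ℕ) := inner_curvatureDeriv_tangent hF m hp
  have hn' (m : ℕ) : ⟪tangent F p, curvatureDeriv F m p⟫ = 0 := by
    rw [real_inner_comm]; exact hn m
  rw [arcDeriv_inner (hd c) (hd d)]
  change _ = ⟪normalDeriv F _ p, _⟫ + ⟪_, normalDeriv F _ p⟫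
  simp only [hB, inner_add_left, inner_add_right, real_inner_smul_left, real_inner_smul_right,
    hn, hn', mul_zero, add_zero]
  ring

end Normality

section NormalDeriv

variable {ψ ψ' : ℝ × ℝ → E} {a : ℝ × ℝ → ℝ}

theorem inner_normalDeriv_tangent (hp : p ∈ regularSet F) (ψ : ℝ × ℝ → E) :
    ⟪normalDeriv F ψ p, tangent F p⟫ = 0 :=
  inner_normalPart_tangent hp _

theorem normalDeriv_add (hψ : DifferentiableAt ℝ ψ p) (hψ' : DifferentiableAt ℝ ψ' p) :
    normalDeriv F (fun q => ψ q + ψ' q) p = normalDeriv F ψ p + normalDeriv F ψ' p := by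
  rw [normalDeriv, arcDeriv_add hψ hψ', normalPart_add]; rfl

theorem normalDeriv_sub (hψ : DifferentiableAt ℝ ψ p) (hψ' : DifferentiableAt ℝ ψ' p) :
    normalDeriv F (fun q => ψ q - ψ' q) p = normalDeriv F ψ p - normalDeriv F ψ' p := by
  rw [normalDeriv, arcDeriv_sub hψ hψ', normalPart_sub]; rfl

theorem normalDeriv_smul (ha : DifferentiableAt ℝ a p) (hψ : DifferentiableAt ℝ ψ p)
    (hψn : ⟪ψ p, tangent F p⟫ = 0) :
    normalDeriv F (fun q => a q • ψ q) p = a p • normalDeriv F ψ p + arcDeriv F a p • ψ p := by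
  rw [normalDeriv, arcDeriv_smul ha hψ, normalPart_add, normalPart_smul, normalPart_smul,
    normalPart_eq_self hψn]; rfl

theorem normalDeriv_const_smul (r : ℝ) (hψ : DifferentiableAt ℝ ψ p) :
    normalDeriv F (fun q => r • ψ q) p = r • normalDeriv F ψ p := by
  rw [normalDeriv, arcDeriv_smul (differentiableAt_const r) hψ, arcDeriv_const, zero_smul,
    add_zero, normalPart_smul]; rfl

theorem normalDeriv_const (v : E) : normalDeriv F (fun _ => v) p = 0 := by
  rw [normalDeriv, arcDeriv_const, normalPart, inner_zero_left, zero_smul, sub_zero]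

theorem normalDeriv_congr {s : Set (ℝ × ℝ)} (hs : IsOpen s) (hp : p ∈ s) (h : EqOn ψ ψ' s) :
    normalDeriv F ψ p = normalDeriv F ψ' p := by
  rw [normalDeriv, normalDeriv, arcDeriv_congr hs hp h]

theorem normalDeriv_eq_normalDeriv_normalPart (hF : ContDiff ℝ ∞ F)
    (hψ : ContDiffOn ℝ ∞ ψ (regularSet F)) (hp : p ∈ regularSet F) :
    normalDeriv F ψ p = normalDeriv F (fun q => normalPart F q (ψ q)) p
      + ⟪ψ p, tangent F p⟫ • curvatureDeriv F 0 p := by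
  have hsplit : ψ = fun q => normalPart F q (ψ q) + ⟪ψ q, tangent F q⟫ • tangent F q := by
    funext q; rw [normalPart, sub_add_cancel]
  have hτ := differentiableAt_of_contDiffOn_regularSet hF (contDiffOn_tangent hF) hp
  have hinner :=
    differentiableAt_of_contDiffOn_regularSet hF (hψ.inner ℝ (contDiffOn_tangent hF)) hp
  have hnormal :=
    differentiableAt_of_contDiffOn_regularSet hF (contDiffOn_normalPart hF hψ) hp
  conv_lhs => rw [hsplit]
  rw [normalDeriv, arcDeriv_add (g' := fun q => ⟪ψ q, tangent F q⟫ • tangent F q) hnormal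
      (hinner.smul hτ),
    arcDeriv_smul hinner hτ, normalPart_add, normalPart_add, normalPart_smul,
    normalPart_smul_tangent hp, add_zero,
    normalPart_eq_self (v := arcDeriv F (tangent F) p) (inner_curvatureDeriv_tangent hF 0 hp)]
  rfl

end NormalDeriv

end Geometry

section Evolution

variable {E : Type*} [NormedAddCommGroup E] [InnerProductSpace ℝ E]
  {G : Type*} [NormedAddCommGroup G] [NormedSpace ℝ G]

structure IsFlow (F V : ℝ × ℝ → E) (φ : ℝ × ℝ → ℝ) (W : Set (ℝ × ℝ)) : Prop where
  contDiff : ContDiff ℝ ∞ F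
  contDiffOn_velocity : ContDiffOn ℝ ∞ V (regularSet F)
  inner_velocity_tangent : ∀ q ∈ regularSet F, ⟪V q, tangent F q⟫ = 0
  contDiffOn_tangential : ContDiffOn ℝ ∞ φ (regularSet F)
  isOpen : IsOpen W
  subset_regularSet : W ⊆ regularSet F
  derivT_eq : EqOn (derivT F) (fun q => V q + φ q • tangent F q) W

variable {F V : ℝ × ℝ → E} {φ : ℝ × ℝ → ℝ} {W : Set (ℝ × ℝ)} {p : ℝ × ℝ}

namespace IsFlow

theorem differentiableAt (h : IsFlow F V φ W) {g : ℝ × ℝ → G}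
    (hg : ContDiffOn ℝ ∞ g (regularSet F)) (hp : p ∈ W) : DifferentiableAt ℝ g p :=
  differentiableAt_of_contDiffOn_regularSet h.contDiff hg (h.subset_regularSet hp)

theorem derivT_inv_norm_derivX (h : IsFlow F V φ W) (hp : p ∈ W) :
    derivT (fun q => ‖derivX F q‖⁻¹) p
      = ‖derivX F p‖⁻¹ * (⟪V p, curvatureDeriv F 0 p⟫ - arcDeriv F φ p) := by
  have hpU := h.subset_regularSet hp
  have hφ := h.differentiableAt h.contDiffOn_tangential hp
  have hτ := h.differentiableAt (contDiffOn_tangent h.contDiff) hp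
  have hXT : derivT (derivX F) p
      = derivX V p + (φ p • derivX (tangent F) p + derivX φ p • tangent F p) := by
    rw [derivT_derivX isOpen_univ h.contDiff.contDiffOn (mem_univ p),
      derivX_congr h.isOpen hp h.derivT_eq,
      derivX_add (g' := fun q => φ q • tangent F q) (h.differentiableAt h.contDiffOn_velocity hp)
        (hφ.smul hτ),
      derivX_smul hφ hτ]
  have hV : ⟪tangent F p, arcDeriv F V p⟫ = -⟪V p, curvatureDeriv F 0 p⟫ := by
    rw [real_inner_comm]
    exact inner_arcDeriv_tangent h.contDiff h.contDiffOn_velocity h.inner_velocity_tangent hpU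
  have hκ : ⟪tangent F p, curvatureDeriv F 0 p⟫ = 0 := by
    rw [real_inner_comm]; exact inner_curvatureDeriv_tangent h.contDiff 0 hpU
  have hX : derivX F p = ‖derivX F p‖ • tangent F p := derivX_eq_norm_smul_arcDeriv hpU F
  rw [derivT_inv_norm (h.differentiableAt ((contDiffOn_derivX isOpen_univ
      h.contDiff.contDiffOn).mono (subset_univ _)) hp) hpU, hXT,
    derivX_eq_norm_smul_arcDeriv hpU V, derivX_eq_norm_smul_arcDeriv hpU (tangent F),
    derivX_eq_norm_smul_arcDeriv hpU φ]
  have hv : ‖derivX F p‖ ≠ 0 := norm_ne_zero_iff.2 hpU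
  set v := ‖derivX F p‖
  rw [hX]
  change _ * ⟪_ • tangent F p, _ + (_ • (_ • curvatureDeriv F 0 p) + _)⟫ = _
  simp only [inner_add_right, real_inner_smul_left, real_inner_smul_right, smul_eq_mul, hV, hκ,
    inner_tangent_self hpU]
  field_simp
  ring

theorem derivT_arcDeriv (h : IsFlow F V φ W) {g : ℝ × ℝ → G}
    (hg : ContDiffOn ℝ ∞ g (regularSet F)) (hp : p ∈ W) :
    derivT (arcDeriv F g) p = arcDeriv F (derivT g) p
      + (⟪V p, curvatureDeriv F 0 p⟫ - arcDeriv F φ p) • arcDeriv F g p := by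
  have hU := isOpen_regularSet h.contDiff
  rw [show arcDeriv F g = fun q => ‖derivX F q‖⁻¹ • derivX g q from rfl,
    derivT_smul (h.differentiableAt (contDiffOn_inv_norm_derivX h.contDiff) hp)
      (h.differentiableAt (contDiffOn_derivX hU hg) hp),
    derivT_inv_norm_derivX h hp, derivT_derivX hU hg (h.subset_regularSet hp)]
  simp only [arcDeriv]
  module

theorem derivT_tangent (h : IsFlow F V φ W) (hp : p ∈ W) :
    derivT (tangent F) p = normalDeriv F V p + φ p • curvatureDeriv F 0 p := by
  have hφ := h.differentiableAt h.contDiffOn_tangential hp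
  have hτ := h.differentiableAt (contDiffOn_tangent h.contDiff) hp
  rw [tangent, derivT_arcDeriv h h.contDiff.contDiffOn hp, arcDeriv_congr h.isOpen hp h.derivT_eq,
    arcDeriv_add (g' := fun q => φ q • tangent F q) (h.differentiableAt h.contDiffOn_velocity hp)
      (hφ.smul hτ),
    arcDeriv_smul hφ hτ, normalDeriv_eq_of_normal h.contDiff h.contDiffOn_velocity
      h.inner_velocity_tangent (h.subset_regularSet hp)]
  change _ + (_ • curvatureDeriv F 0 p + _) + _ • tangent F p = _
  module

theorem inner_derivT_tangent (h : IsFlow F V φ W) {ψ : ℝ × ℝ → E}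
    (hψ : ContDiffOn ℝ ∞ ψ (regularSet F)) (hψn : ∀ q ∈ regularSet F, ⟪ψ q, tangent F q⟫ = 0)
    (hp : p ∈ W) :
    ⟪derivT ψ p, tangent F p⟫
      = -⟪ψ p, normalDeriv F V p⟫ - φ p * ⟪ψ p, curvatureDeriv F 0 p⟫ := by
  have h0 := inner_derivT_add_inner_derivT_eq_zero h.contDiff hψ (contDiffOn_tangent h.contDiff)
    hψn (h.subset_regularSet hp)
  rw [derivT_tangent h hp, inner_add_right, real_inner_smul_right] at h0
  linarith

theorem normalPart_derivT_arcDeriv (h : IsFlow F V φ W) {ψ : ℝ × ℝ → E}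
    (hψ : ContDiffOn ℝ ∞ ψ (regularSet F)) (hp : p ∈ W) :
    normalPart F p (derivT (arcDeriv F ψ) p) = normalDeriv F (derivT ψ) p
      + (⟪V p, curvatureDeriv F 0 p⟫ - arcDeriv F φ p) • normalDeriv F ψ p := by
  rw [derivT_arcDeriv h hψ hp, normalPart_add, normalPart_smul]; rfl

theorem normalTimeDeriv_curvature (h : IsFlow F V φ W) (hp : p ∈ W) :
    normalTimeDeriv F (curvatureDeriv F 0) p = normalDeriv F (normalDeriv F V) p
      + φ p • curvatureDeriv F 1 p + ⟪V p, curvatureDeriv F 0 p⟫ • curvatureDeriv F 0 p := by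
  have hF := h.contDiff
  have hpU := h.subset_regularSet hp
  have hφ := h.differentiableAt h.contDiffOn_tangential hp
  have hκ := h.differentiableAt (contDiffOn_curvatureDeriv hF 0) hp
  have hτκ : normalDeriv F (tangent F) p = curvatureDeriv F 0 p :=
    normalPart_eq_self (inner_curvatureDeriv_tangent hF 0 hpU)
  change normalPart F p (derivT (arcDeriv F (tangent F)) p)
    = _ + φ p • normalDeriv F (curvatureDeriv F 0) p + _
  rw [normalPart_derivT_arcDeriv h (contDiffOn_tangent hF) hp,
    normalDeriv_congr h.isOpen hp fun q hq => derivT_tangent h hq,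
    normalDeriv_add (ψ' := fun q => φ q • curvatureDeriv F 0 q)
      (h.differentiableAt (contDiffOn_normalDeriv hF h.contDiffOn_velocity) hp) (hφ.smul hκ),
    normalDeriv_smul hφ hκ (inner_curvatureDeriv_tangent hF 0 hpU), hτκ]
  module

theorem normalTimeDeriv_normalDeriv (h : IsFlow F V φ W) {ψ : ℝ × ℝ → E}
    (hψ : ContDiffOn ℝ ∞ ψ (regularSet F)) (hψn : ∀ q ∈ regularSet F, ⟪ψ q, tangent F q⟫ = 0)
    (hp : p ∈ W) :
    normalTimeDeriv F (normalDeriv F ψ) p = normalDeriv F (normalTimeDeriv F ψ) p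
      + (⟪V p, curvatureDeriv F 0 p⟫ - arcDeriv F φ p) • normalDeriv F ψ p
      + ⟪ψ p, curvatureDeriv F 0 p⟫ • normalDeriv F V p
      - ⟪ψ p, normalDeriv F V p⟫ • curvatureDeriv F 0 p := by
  have hF := h.contDiff
  have hpU := h.subset_regularSet hp
  have hU := isOpen_regularSet hF
  have hc := h.differentiableAt (hψ.inner ℝ (contDiffOn_curvatureDeriv hF 0)) hp
  have hτ := h.differentiableAt (contDiffOn_tangent hF) hp
  have hnormal : ⟪normalDeriv F V p + φ p • curvatureDeriv F 0 p, tangent F p⟫ = 0 := by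
    rw [inner_add_left, real_inner_smul_left, inner_normalDeriv_tangent hpU,
      inner_curvatureDeriv_tangent hF 0 hpU, mul_zero, add_zero]
  have hexpand : derivT (normalDeriv F ψ) p = derivT (fun q =>
      arcDeriv F ψ q + ⟪ψ q, curvatureDeriv F 0 q⟫ • tangent F q) p :=
    derivT_congr hU hpU fun q hq => normalDeriv_eq_of_normal hF hψ hψn hq
  rw [normalTimeDeriv, hexpand,
    derivT_add (g' := fun q => ⟪ψ q, curvatureDeriv F 0 q⟫ • tangent F q)
      (h.differentiableAt (contDiffOn_arcDeriv hF hψ) hp) (hc.smul hτ),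
    derivT_smul hc hτ, normalPart_add, normalPart_add, normalPart_smul, normalPart_smul_tangent hpU,
    normalPart_derivT_arcDeriv h hψ hp,
    normalDeriv_eq_normalDeriv_normalPart hF (contDiffOn_derivT hU hψ) hpU,
    inner_derivT_tangent h hψ hψn hp, derivT_tangent h hp, normalPart_eq_self hnormal]
  change normalDeriv F (normalTimeDeriv F ψ) p + _ • _ + _ + (_ + 0) = _
  module

end IsFlow

end Evolution

section Polynomials

variable {E : Type*} [NormedAddCommGroup E] [InnerProductSpace ℝ E]

inductive IsCurvatureMonomial (F : ℝ × ℝ → E) (lam : ℝ → ℝ) : ℕ → (ℝ × ℝ → ℝ) → Prop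
  | inner (c d : ℕ) {w : ℕ} (hw : c + d + 2 = w) :
      IsCurvatureMonomial F lam w fun p => ⟪curvatureDeriv F c p, curvatureDeriv F d p⟫
  | lam : IsCurvatureMonomial F lam 2 fun p => lam p.1
  | mul {w₁ w₂ w : ℕ} {a b : ℝ × ℝ → ℝ} :
      IsCurvatureMonomial F lam w₁ a → IsCurvatureMonomial F lam w₂ b → w₁ + w₂ = w →
      IsCurvatureMonomial F lam w fun p => a p * b p

/-- Since every coefficient `a` has weight at least `2`, a term of weight `w` only involves
`∇ₛ^e κ` with `e + 3 ≤ w`. -/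
inductive IsLowerOrderTerm (F : ℝ × ℝ → E) (lam : ℝ → ℝ) : ℕ → (ℝ × ℝ → E) → Prop
  | zero (w : ℕ) : IsLowerOrderTerm F lam w fun _ => 0
  | smul_curvatureDeriv {w₁ w : ℕ} {a : ℝ × ℝ → ℝ} (e : ℕ) :
      IsCurvatureMonomial F lam w₁ a → w₁ + e + 1 = w →
      IsLowerOrderTerm F lam w fun p => a p • curvatureDeriv F e p
  | const_smul (r : ℝ) {w : ℕ} {ψ : ℝ × ℝ → E} :
      IsLowerOrderTerm F lam w ψ → IsLowerOrderTerm F lam w fun p => r • ψ p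
  | add {w : ℕ} {ψ χ : ℝ × ℝ → E} :
      IsLowerOrderTerm F lam w ψ → IsLowerOrderTerm F lam w χ →
      IsLowerOrderTerm F lam w fun p => ψ p + χ p

variable {F : ℝ × ℝ → E} {lam : ℝ → ℝ} {w : ℕ} {a : ℝ × ℝ → ℝ} {ψ : ℝ × ℝ → E} {p : ℝ × ℝ}

namespace IsCurvatureMonomial

theorem two_le (ha : IsCurvatureMonomial F lam w a) : 2 ≤ w := by
  induction ha <;> omega

theorem contDiffOn (hF : ContDiff ℝ ∞ F) (hlam : ContDiff ℝ ∞ lam)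
    (ha : IsCurvatureMonomial F lam w a) : ContDiffOn ℝ ∞ a (regularSet F) := by
  induction ha with
  | inner c d => exact (contDiffOn_curvatureDeriv hF c).inner ℝ (contDiffOn_curvatureDeriv hF d)
  | lam => exact (hlam.comp contDiff_fst).contDiffOn
  | mul _ _ _ iha ihb => exact iha.mul ihb

end IsCurvatureMonomial

namespace IsLowerOrderTerm

theorem congr {ψ' : ℝ × ℝ → E} (hψ : IsLowerOrderTerm F lam w ψ) (h : ∀ p, ψ p = ψ' p) :
    IsLowerOrderTerm F lam w ψ' :=
  funext h ▸ hψ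

theorem contDiffOn (hF : ContDiff ℝ ∞ F) (hlam : ContDiff ℝ ∞ lam)
    (hψ : IsLowerOrderTerm F lam w ψ) : ContDiffOn ℝ ∞ ψ (regularSet F) := by
  induction hψ with
  | zero => exact contDiffOn_const
  | smul_curvatureDeriv e ha => exact (ha.contDiffOn hF hlam).smul (contDiffOn_curvatureDeriv hF e)
  | const_smul r _ ih => exact contDiffOn_const.smul ih
  | add _ _ ih ih' => exact ih.add ih'

theorem inner_tangent (hF : ContDiff ℝ ∞ F) (hψ : IsLowerOrderTerm F lam w ψ)
    (hp : p ∈ regularSet F) : ⟪ψ p, tangent F p⟫ = 0 := by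
  induction hψ with
  | zero => exact inner_zero_left _
  | smul_curvatureDeriv e _ =>
    rw [real_inner_smul_left, inner_curvatureDeriv_tangent hF e hp, mul_zero]
  | const_smul r _ ih => rw [real_inner_smul_left, ih, mul_zero]
  | add _ _ ih ih' => rw [inner_add_left, ih, ih', add_zero]

theorem monomial_smul {w₁ w₂ : ℕ} (ha : IsCurvatureMonomial F lam w₁ a)
    (hψ : IsLowerOrderTerm F lam w₂ ψ) (hw : w₁ + w₂ = w) :
    IsLowerOrderTerm F lam w fun p => a p • ψ p := by
  subst hw
  induction hψ with
  | zero => exact (zero _).congr fun p => (smul_zero _).symm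
  | smul_curvatureDeriv e hb hw =>
    exact (smul_curvatureDeriv e (ha.mul hb rfl) (by omega)).congr fun p => mul_smul _ _ _
  | const_smul r _ ih => exact (ih.const_smul r).congr fun p => smul_comm _ _ _
  | add _ _ ih ih' => exact (ih.add ih').congr fun p => (smul_add _ _ _).symm

theorem inner_smul_curvatureDeriv {w' : ℕ} (hψ : IsLowerOrderTerm F lam w ψ) (c e : ℕ)
    (hw : w + c + e + 2 = w') :
    IsLowerOrderTerm F lam w' fun p => ⟪ψ p, curvatureDeriv F c p⟫ • curvatureDeriv F e p := by
  subst hw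
  induction hψ with
  | zero => exact (zero _).congr fun p => by rw [inner_zero_left, zero_smul]
  | smul_curvatureDeriv d ha hw =>
    refine (smul_curvatureDeriv e (ha.mul (.inner d c rfl) rfl) (by omega)).congr fun p => ?_
    rw [real_inner_smul_left]
  | const_smul r _ ih =>
    exact (ih.const_smul r).congr fun p => by rw [real_inner_smul_left, mul_smul]
  | add _ _ ih ih' => exact (ih.add ih').congr fun p => by rw [inner_add_left, add_smul]

theorem sub {χ : ℝ × ℝ → E} (hψ : IsLowerOrderTerm F lam w ψ)
    (hχ : IsLowerOrderTerm F lam w χ) : IsLowerOrderTerm F lam w fun p => ψ p - χ p :=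
  (hψ.add (hχ.const_smul (-1))).congr fun p => by rw [neg_one_smul, sub_eq_add_neg]

end IsLowerOrderTerm

theorem IsCurvatureMonomial.exists_arcDeriv_smul_curvatureDeriv (hF : ContDiff ℝ ∞ F)
    (hlam : ContDiff ℝ ∞ lam) (ha : IsCurvatureMonomial F lam w a) (e : ℕ) :
    ∃ ψ, IsLowerOrderTerm F lam (w + e + 2) ψ ∧
      EqOn (fun p => arcDeriv F a p • curvatureDeriv F e p) ψ (regularSet F) := by
  induction ha with
  | inner c d hw =>
    refine ⟨fun p => ⟪curvatureDeriv F (c + 1) p, curvatureDeriv F d p⟫ • curvatureDeriv F e p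
      + ⟪curvatureDeriv F c p, curvatureDeriv F (d + 1) p⟫ • curvatureDeriv F e p,
      .add (.smul_curvatureDeriv e (.inner _ _ rfl) (by omega))
        (.smul_curvatureDeriv e (.inner _ _ rfl) (by omega)), fun p hp => ?_⟩
    simp only [arcDeriv_inner_curvatureDeriv hF c d hp, add_smul]
  | lam =>
    exact ⟨fun _ => 0, .zero _, fun p _ => by simp only [arcDeriv_comp_fst, zero_smul]⟩
  | @mul w₁ w₂ w a b ha hb hw iha ihb =>
    obtain ⟨ψa, hψa, ea⟩ := iha
    obtain ⟨ψb, hψb, eb⟩ := ihb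
    refine ⟨fun p => b p • ψa p + a p • ψb p,
      (hψa.monomial_smul hb (by omega)).add (hψb.monomial_smul ha (by omega)), fun p hp => ?_⟩
    have hprod := arcDeriv_smul (F := F)
      (differentiableAt_of_contDiffOn_regularSet hF (ha.contDiffOn hF hlam) hp)
      (differentiableAt_of_contDiffOn_regularSet hF (hb.contDiffOn hF hlam) hp)
    simp only [smul_eq_mul] at hprod
    simp only [hprod, ← ea hp, ← eb hp]
    module

theorem IsLowerOrderTerm.exists_normalDeriv (hF : ContDiff ℝ ∞ F) (hlam : ContDiff ℝ ∞ lam)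
    (hψ : IsLowerOrderTerm F lam w ψ) :
    ∃ ψ', IsLowerOrderTerm F lam (w + 1) ψ' ∧ EqOn (normalDeriv F ψ) ψ' (regularSet F) := by
  induction hψ with
  | zero w => exact ⟨fun _ => 0, .zero _, fun p _ => normalDeriv_const 0⟩
  | @smul_curvatureDeriv w₁ w a e ha hw =>
    obtain ⟨χ, hχ, eχ⟩ := ha.exists_arcDeriv_smul_curvatureDeriv hF hlam e
    refine ⟨fun p => a p • curvatureDeriv F (e + 1) p + χ p,
      (IsLowerOrderTerm.smul_curvatureDeriv (e + 1) ha (by omega)).add (by rwa [← hw]),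
      fun p hp => ?_⟩
    rw [normalDeriv_smul (differentiableAt_of_contDiffOn_regularSet hF (ha.contDiffOn hF hlam) hp)
      (differentiableAt_of_contDiffOn_regularSet hF (contDiffOn_curvatureDeriv hF e) hp)
      (inner_curvatureDeriv_tangent hF e hp)]
    exact congrArg (a p • normalDeriv F (curvatureDeriv F e) p + ·) (eχ hp)
  | const_smul r hψ ih =>
    obtain ⟨ψ', hψ', e⟩ := ih
    refine ⟨fun p => r • ψ' p, hψ'.const_smul r, fun p hp => ?_⟩
    rw [normalDeriv_const_smul r
      (differentiableAt_of_contDiffOn_regularSet hF (hψ.contDiffOn hF hlam) hp), e hp]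
  | add hψ hχ ihψ ihχ =>
    obtain ⟨ψ', hψ', eψ⟩ := ihψ
    obtain ⟨χ', hχ', eχ⟩ := ihχ
    refine ⟨fun p => ψ' p + χ' p, hψ'.add hχ', fun p hp => ?_⟩
    rw [normalDeriv_add (differentiableAt_of_contDiffOn_regularSet hF (hψ.contDiffOn hF hlam) hp)
      (differentiableAt_of_contDiffOn_regularSet hF (hχ.contDiffOn hF hlam) hp), eψ hp, eχ hp]

theorem IsCurvatureMonomial.eq_zero_of_odd {N : ℕ}
    (hB : ∀ e ≤ N, Even e → curvatureDeriv F e p = 0) (ha : IsCurvatureMonomial F lam w a)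
    (hodd : Odd w) (hw : w ≤ N + 2) : a p = 0 := by
  induction ha with
  | inner c d hcd =>
    dsimp only
    rw [Nat.odd_iff] at hodd
    rcases Nat.even_or_odd c with hc | hc
    · rw [hB c (by omega) hc, inner_zero_left]
    · rw [Nat.odd_iff] at hc
      rw [hB d (by omega) (Nat.even_iff.2 (by omega)), inner_zero_right]
  | lam => exact absurd hodd (by decide)
  | @mul w₁ w₂ w a b ha hb hw' iha ihb =>
    dsimp only
    rcases Nat.even_or_odd w₁ with h₁ | h₁
    · have h₂ : Odd w₂ := by rw [Nat.odd_iff] at hodd ⊢; rw [Nat.even_iff] at h₁; omega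
      rw [ihb h₂ (by omega), mul_zero]
    · rw [iha h₁ (by omega), zero_mul]

theorem IsLowerOrderTerm.eq_zero_of_odd {N : ℕ}
    (hB : ∀ e ≤ N, Even e → curvatureDeriv F e p = 0) (hψ : IsLowerOrderTerm F lam w ψ)
    (hodd : Odd w) (hw : w ≤ N + 3) : ψ p = 0 := by
  induction hψ with
  | zero => rfl
  | @smul_curvatureDeriv w₁ w a e ha hw' =>
    have := ha.two_le
    dsimp only
    rcases Nat.even_or_odd e with he | he
    · rw [hB e (by omega) he, smul_zero]
    · have h₁ : Odd w₁ := by rw [Nat.odd_iff] at hodd he ⊢; omega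
      rw [ha.eq_zero_of_odd hB h₁ (by omega), zero_smul]
  | const_smul r _ ih => simp only [ih hodd hw, smul_zero]
  | add _ _ ih ih' => simp only [ih hodd hw, ih' hodd hw, add_zero]

def HasLeadingTerm (F : ℝ × ℝ → E) (lam : ℝ → ℝ) (k : ℕ) (ψ : ℝ × ℝ → E) : Prop :=
  ∃ R, IsLowerOrderTerm F lam (k + 1) R ∧
    EqOn ψ (fun p => R p - curvatureDeriv F k p) (regularSet F)

namespace HasLeadingTerm

variable {k : ℕ}

theorem contDiffOn (hF : ContDiff ℝ ∞ F) (hlam : ContDiff ℝ ∞ lam)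
    (hψ : HasLeadingTerm F lam k ψ) : ContDiffOn ℝ ∞ ψ (regularSet F) := by
  obtain ⟨R, hR, eR⟩ := hψ
  exact ((hR.contDiffOn hF hlam).sub (contDiffOn_curvatureDeriv hF k)).congr eR

theorem inner_tangent (hF : ContDiff ℝ ∞ F) (hψ : HasLeadingTerm F lam k ψ)
    (hp : p ∈ regularSet F) : ⟪ψ p, tangent F p⟫ = 0 := by
  obtain ⟨R, hR, eR⟩ := hψ
  rw [eR hp, inner_sub_left, hR.inner_tangent hF hp, inner_curvatureDeriv_tangent hF k hp,
    sub_zero]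

theorem normalDeriv (hF : ContDiff ℝ ∞ F) (hlam : ContDiff ℝ ∞ lam)
    (hψ : HasLeadingTerm F lam k ψ) : HasLeadingTerm F lam (k + 1) (normalDeriv F ψ) := by
  obtain ⟨R, hR, eR⟩ := hψ
  obtain ⟨R', hR', eR'⟩ := hR.exists_normalDeriv hF hlam
  refine ⟨R', hR', fun p hp => ?_⟩
  rw [normalDeriv_congr (isOpen_regularSet hF) hp eR,
    normalDeriv_sub (differentiableAt_of_contDiffOn_regularSet hF (hR.contDiffOn hF hlam) hp)
      (differentiableAt_of_contDiffOn_regularSet hF (contDiffOn_curvatureDeriv hF k) hp), eR' hp]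
  rfl

theorem exists_monomial_smul {w₁ : ℕ} (hψ : HasLeadingTerm F lam k ψ)
    (ha : IsCurvatureMonomial F lam w₁ a) (hw : w₁ + k + 1 = w) :
    ∃ R, IsLowerOrderTerm F lam w R ∧
      EqOn (fun p => a p • ψ p) R (regularSet F) := by
  obtain ⟨R, hR, eR⟩ := hψ
  refine ⟨fun p => a p • R p - a p • curvatureDeriv F k p,
    (hR.monomial_smul ha (by omega)).sub (.smul_curvatureDeriv k ha hw), fun p hp => ?_⟩
  simp only [eR hp, smul_sub]

theorem exists_inner_smul_curvatureDeriv (hψ : HasLeadingTerm F lam k ψ) (c e : ℕ)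
    (hw : k + c + e + 3 = w) :
    ∃ R, IsLowerOrderTerm F lam w R ∧
      EqOn (fun p => ⟪ψ p, curvatureDeriv F c p⟫ • curvatureDeriv F e p) R (regularSet F) := by
  obtain ⟨R, hR, eR⟩ := hψ
  refine ⟨fun p => ⟪R p, curvatureDeriv F c p⟫ • curvatureDeriv F e p
      - ⟪curvatureDeriv F k p, curvatureDeriv F c p⟫ • curvatureDeriv F e p,
    (hR.inner_smul_curvatureDeriv c e (by omega)).sub
      (.smul_curvatureDeriv e (.inner k c rfl) (by omega)), fun p hp => ?_⟩
  simp only [eR hp, inner_sub_left, sub_smul]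

end HasLeadingTerm

end Polynomials

section CurvatureEvolution

variable {E : Type*} [NormedAddCommGroup E] [InnerProductSpace ℝ E]
  {F V : ℝ × ℝ → E} {φ : ℝ × ℝ → ℝ} {W : Set (ℝ × ℝ)} {lam : ℝ → ℝ}

namespace IsFlow

theorem exists_normalTimeDeriv_curvature (h : IsFlow F V φ W) (hlam : ContDiff ℝ ∞ lam)
    (hV : HasLeadingTerm F lam 2 V) :
    ∃ R, IsLowerOrderTerm F lam 5 R ∧ EqOn (normalTimeDeriv F (curvatureDeriv F 0))
      (fun p => R p - curvatureDeriv F 4 p + φ p • curvatureDeriv F 1 p) W := by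
  obtain ⟨R, hR, eR⟩ : HasLeadingTerm F lam 4 (normalDeriv F (normalDeriv F V)) :=
    (hV.normalDeriv h.contDiff hlam).normalDeriv h.contDiff hlam
  obtain ⟨X, hX, eX⟩ := hV.exists_inner_smul_curvatureDeriv 0 0 (w := 5) rfl
  refine ⟨fun p => R p + X p, hR.add hX, fun p hp => ?_⟩
  have hpU := h.subset_regularSet hp
  have hXp := eX hpU
  dsimp only at hXp ⊢
  rw [h.normalTimeDeriv_curvature hp, eR hpU, ← hXp]
  module

theorem exists_normalTimeDeriv_curvatureDeriv_succ (h : IsFlow F V φ W)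
    (hlam : ContDiff ℝ ∞ lam) (hV : HasLeadingTerm F lam 2 V) {m : ℕ} {R : ℝ × ℝ → E}
    (hR : IsLowerOrderTerm F lam (m + 5) R) (eR : EqOn (normalTimeDeriv F (curvatureDeriv F m))
      (fun p => R p - curvatureDeriv F (m + 4) p + φ p • curvatureDeriv F (m + 1) p) W) :
    ∃ R', IsLowerOrderTerm F lam (m + 6) R' ∧ EqOn (normalTimeDeriv F (curvatureDeriv F (m + 1)))
      (fun p => R' p - curvatureDeriv F (m + 5) p + φ p • curvatureDeriv F (m + 2) p) W := by
  have hF := h.contDiff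
  have hV' := hV.normalDeriv hF hlam
  obtain ⟨R₁, hR₁, e₁⟩ := hR.exists_normalDeriv hF hlam
  obtain ⟨X₁, hX₁, e₁'⟩ := hV.exists_inner_smul_curvatureDeriv 0 (m + 1) (w := m + 6) (by omega)
  obtain ⟨X₂, hX₂, e₂⟩ := hV'.exists_monomial_smul (.inner m 0 rfl) (w := m + 6) (by omega)
  obtain ⟨X₃, hX₃, e₃⟩ := hV'.exists_inner_smul_curvatureDeriv m 0 (w := m + 6) (by omega)
  refine ⟨fun p => R₁ p + X₁ p + X₂ p - X₃ p, ((hR₁.add hX₁).add hX₂).sub hX₃, fun p hp => ?_⟩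
  have hpU := h.subset_regularSet hp
  have hB := contDiffOn_curvatureDeriv hF
  have hRd := h.differentiableAt (hR.contDiffOn hF hlam) hp
  have hBd (k : ℕ) := h.differentiableAt (hB k) hp
  have hφ := h.differentiableAt h.contDiffOn_tangential hp
  have h₁ := e₁' hpU
  have h₂ := e₂ hpU
  have h₃ := e₃ hpU
  dsimp only at h₁ h₂ h₃ ⊢
  change normalTimeDeriv F (normalDeriv F (curvatureDeriv F m)) p = _
  rw [h.normalTimeDeriv_normalDeriv (hB m) (fun q hq => inner_curvatureDeriv_tangent hF m hq) hp,
    normalDeriv_congr h.isOpen hp eR,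
    normalDeriv_add (ψ := fun q => R q - curvatureDeriv F (m + 4) q)
      (ψ' := fun q => φ q • curvatureDeriv F (m + 1) q) (hRd.sub (hBd _)) (hφ.smul (hBd _)),
    normalDeriv_sub hRd (hBd _),
    normalDeriv_smul hφ (hBd _) (inner_curvatureDeriv_tangent hF _ hpU), e₁ hpU,
    real_inner_comm (normalDeriv F V p), ← h₁, ← h₂, ← h₃]
  change _ - curvatureDeriv F (m + 5) p + (_ • curvatureDeriv F (m + 2) p + _)
    + _ • curvatureDeriv F (m + 1) p + _ - _ = _
  -- the two `∂ₛφ • ∇ₛ^{m+1} κ` terms cancel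
  module

theorem exists_normalTimeDeriv_curvatureDeriv (h : IsFlow F V φ W) (hlam : ContDiff ℝ ∞ lam)
    (hV : HasLeadingTerm F lam 2 V) (m : ℕ) :
    ∃ R, IsLowerOrderTerm F lam (m + 5) R ∧ EqOn (normalTimeDeriv F (curvatureDeriv F m))
      (fun p => R p - curvatureDeriv F (m + 4) p + φ p • curvatureDeriv F (m + 1) p) W := by
  induction m with
  | zero => exact h.exists_normalTimeDeriv_curvature hlam hV
  | succ m ih =>
    obtain ⟨R, hR, eR⟩ := ih
    exact h.exists_normalTimeDeriv_curvatureDeriv_succ hlam hV hR eR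

end IsFlow

end CurvatureEvolution

section FixedEnd

variable {E : Type*} [NormedAddCommGroup E] [InnerProductSpace ℝ E]
  {F : ℝ × ℝ → E} {φ : ℝ × ℝ → ℝ} {lam : ℝ → ℝ} {T : ℝ}

def elasticVelocity (F : ℝ × ℝ → E) (lam : ℝ → ℝ) (p : ℝ × ℝ) : E :=
  -curvatureDeriv F 2 p + lam p.1 • curvatureDeriv F 0 p
    - ((1 / 2 : ℝ) * ‖curvatureDeriv F 0 p‖ ^ 2) • curvatureDeriv F 0 p

theorem hasLeadingTerm_elasticVelocity : HasLeadingTerm F lam 2 (elasticVelocity F lam) :=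
  ⟨fun p => lam p.1 • curvatureDeriv F 0 p - (1 / 2 : ℝ) •
      (⟪curvatureDeriv F 0 p, curvatureDeriv F 0 p⟫ • curvatureDeriv F 0 p),
    (IsLowerOrderTerm.smul_curvatureDeriv 0 .lam rfl).sub
      ((IsLowerOrderTerm.smul_curvatureDeriv 0 (.inner 0 0 rfl) rfl).const_smul _),
    fun p _ => by simp only [elasticVelocity, real_inner_self_eq_norm_sq]; module⟩

theorem eq_at_right_end_of_eqOn {G : Type*} [TopologicalSpace G] [T2Space G]
    {χ ξ : ℝ × ℝ → G} {U : Set (ℝ × ℝ)} (h : EqOn χ ξ (Ioo 0 T ×ˢ Ioo 0 1))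
    (hχ : ContinuousOn χ U) (hξ : ContinuousOn ξ U) (hWU : Ioo 0 T ×ˢ Ioo 0 1 ⊆ U) {t : ℝ}
    (ht : t ∈ Ioo 0 T) (htU : (t, 1) ∈ U) : χ (t, 1) = ξ (t, 1) := by
  have hcl : (t, (1 : ℝ)) ∈ closure (Ioo 0 T ×ˢ Ioo 0 1) := by
    rw [closure_prod_eq, closure_Ioo zero_ne_one]
    exact ⟨subset_closure ht, right_mem_Icc.2 zero_le_one⟩
  have hsub : Ioo 0 T ×ˢ Ioo 0 1 ∪ {(t, 1)} ⊆ U := union_subset hWU (singleton_subset_iff.2 htU)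
  exact h.of_subset_closure (hχ.mono hsub) (hξ.mono hsub) subset_union_left
    (union_subset subset_closure (singleton_subset_iff.2 hcl)) (mem_union_right _ rfl)

theorem tangential_eq_zero_and_curvatureDeriv_two_eq_zero (hF : ContDiff ℝ ∞ F) {p : ℝ × ℝ}
    (hp : p ∈ regularSet F) (hflow : derivT F p = elasticVelocity F lam p + φ p • tangent F p)
    (hfix : derivT F p = 0) (hκ : curvatureDeriv F 0 p = 0) :
    φ p = 0 ∧ curvatureDeriv F 2 p = 0 := by
  rw [hfix, elasticVelocity, hκ] at hflow
  have hB : curvatureDeriv F 2 p = φ p • tangent F p := by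
    linear_combination (norm := module) hflow
  have hφ : φ p = 0 := by
    have h := inner_curvatureDeriv_tangent hF 2 hp
    rwa [hB, real_inner_smul_left, inner_tangent_self hp, mul_one] at h
  exact ⟨hφ, by rw [hB, hφ, zero_smul]⟩

theorem curvatureDeriv_add_four_eq_zero_at_right_end
    (h : IsFlow F (elasticVelocity F lam) φ (Ioo 0 T ×ˢ Ioo 0 1)) (hlam : ContDiff ℝ ∞ lam)
    (hreg : ∀ t ∈ Ioo 0 T, (t, 1) ∈ regularSet F) (hφ : ∀ t ∈ Ioo 0 T, φ (t, 1) = 0)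
    {m : ℕ} (hm : Even m)
    (hbelow : ∀ t ∈ Ioo 0 T, ∀ e ≤ m + 2, Even e → curvatureDeriv F e (t, 1) = 0)
    {t : ℝ} (ht : t ∈ Ioo 0 T) : curvatureDeriv F (m + 4) (t, 1) = 0 := by
  have hF := h.contDiff
  obtain ⟨R, hR, eR⟩ :=
    h.exists_normalTimeDeriv_curvatureDeriv hlam hasLeadingTerm_elasticVelocity m
  have hend := eq_at_right_end_of_eqOn eR
    (contDiffOn_normalTimeDeriv hF (contDiffOn_curvatureDeriv hF _)).continuousOn
    (((hR.contDiffOn hF hlam).sub (contDiffOn_curvatureDeriv hF _)).add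
      (h.contDiffOn_tangential.smul (contDiffOn_curvatureDeriv hF _))).continuousOn
    h.subset_regularSet ht (hreg t ht)
  have hlhs : normalTimeDeriv F (curvatureDeriv F m) (t, 1) = 0 := by
    have hconst : ∀ᶠ s in 𝓝 t, curvatureDeriv F m (s, 1) = 0 :=
      Filter.mem_of_superset (isOpen_Ioo.mem_nhds ht) fun s hs => hbelow s hs m (by omega) hm
    rw [normalTimeDeriv, derivT_eq_zero_of_eventually_eq hconst, normalPart, inner_zero_left,
      zero_smul, sub_zero]
  have hR0 : R (t, 1) = 0 := hR.eq_zero_of_odd (hbelow t ht) (hm.add_odd ⟨2, rfl⟩) le_rfl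
  rwa [hlhs, hR0, hφ t ht, zero_smul, add_zero, zero_sub, eq_comm, neg_eq_zero] at hend

theorem curvatureDeriv_two_mul_eq_zero_at_right_end
    (h : IsFlow F (elasticVelocity F lam) φ (Ioo 0 T ×ˢ Ioo 0 1)) (hlam : ContDiff ℝ ∞ lam)
    (hreg : ∀ t ∈ Ioo 0 T, (t, 1) ∈ regularSet F) (hφ : ∀ t ∈ Ioo 0 T, φ (t, 1) = 0)
    (hκ : ∀ t ∈ Ioo 0 T, curvatureDeriv F 0 (t, 1) = 0)
    (hκ₂ : ∀ t ∈ Ioo 0 T, curvatureDeriv F 2 (t, 1) = 0) (j : ℕ) :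
    ∀ t ∈ Ioo 0 T, curvatureDeriv F (2 * j) (t, 1) = 0 := by
  induction j using Nat.strong_induction_on with
  | _ j ih =>
  match j with
  | 0 => exact hκ
  | 1 => exact hκ₂
  | l + 2 =>
    have hbelow : ∀ t ∈ Ioo 0 T, ∀ e ≤ 2 * l + 2, Even e → curvatureDeriv F e (t, 1) = 0 := by
      rintro t ht e he ⟨k, rfl⟩
      simpa [two_mul] using ih k (by omega) t ht
    intro t ht
    rw [show 2 * (l + 2) = 2 * l + 4 by ring]
    exact curvatureDeriv_add_four_eq_zero_at_right_end h hlam hreg hφ (even_two_mul l) hbelow ht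

theorem tangential_eq_zero_and_curvatureDeriv_two_mul_eq_zero_of_fixed_end
    (hF : ContDiff ℝ ∞ F) (hφ : ContDiff ℝ ∞ φ) (hlam : ContDiff ℝ ∞ lam) {P : E}
    (hreg : ∀ t ∈ Ioo 0 T, ∀ x ∈ Icc 0 1, (t, x) ∈ regularSet F)
    (hflow : ∀ t ∈ Ioo 0 T, ∀ x ∈ Icc 0 1,
      derivT F (t, x) = elasticVelocity F lam (t, x) + φ (t, x) • tangent F (t, x))
    (hfix : ∀ t ∈ Ioo 0 T, F (t, 1) = P) (hκ : ∀ t ∈ Ioo 0 T, curvatureDeriv F 0 (t, 1) = 0) :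
    ∀ t ∈ Ioo 0 T, φ (t, 1) = 0 ∧ ∀ j, curvatureDeriv F (2 * j) (t, 1) = 0 := by
  have h1 : (1 : ℝ) ∈ Icc 0 1 := right_mem_Icc.2 zero_le_one
  have hV : HasLeadingTerm F lam 2 (elasticVelocity F lam) := hasLeadingTerm_elasticVelocity
  have hIsFlow : IsFlow F (elasticVelocity F lam) φ (Ioo 0 T ×ˢ Ioo 0 1) :=
    { contDiff := hF
      contDiffOn_velocity := hV.contDiffOn hF hlam
      inner_velocity_tangent := fun _ hq => hV.inner_tangent hF hq
      contDiffOn_tangential := hφ.contDiffOn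
      isOpen := isOpen_Ioo.prod isOpen_Ioo
      subset_regularSet := fun q hq => hreg q.1 hq.1 q.2 (Ioo_subset_Icc_self hq.2)
      derivT_eq := fun q hq => hflow q.1 hq.1 q.2 (Ioo_subset_Icc_self hq.2) }
  have hend (t : ℝ) (ht : t ∈ Ioo 0 T) :=
    tangential_eq_zero_and_curvatureDeriv_two_eq_zero hF (hreg t ht 1 h1) (hflow t ht 1 h1)
      (derivT_eq_zero_of_eventually_eq (c := P) <|
        Filter.mem_of_superset (isOpen_Ioo.mem_nhds ht) hfix) (hκ t ht)
  exact fun t ht => ⟨(hend t ht).1, fun j => curvatureDeriv_two_mul_eq_zero_at_right_end hIsFlow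
    hlam (fun s hs => hreg s hs 1 h1) (fun s hs => (hend s hs).1) hκ (fun s hs => (hend s hs).2)
    j t ht⟩

theorem curvatureDeriv_uncurry {n : ℕ} (f : ℝ → ℝ → EuclideanSpace ℝ (Fin n)) (m : ℕ) (t x : ℝ) :
    curvatureDeriv (Function.uncurry f) m (t, x) = nablaSIter (f t) m (kappa (f t)) x := by
  induction m generalizing x with
  | zero => rfl
  | succ m ih =>
    have hslice : (fun y => curvatureDeriv (Function.uncurry f) m (t, y))
        = nablaSIter (f t) m (kappa (f t)) := funext ih
    change normalPart _ (t, x) (_ • deriv (fun y => curvatureDeriv _ m (t, y)) x) = _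
    rw [hslice]
    rfl

end FixedEnd

end CurveFlow

open CurveFlow

theorem even_curvature_derivatives_vanish_general {n : ℕ} (T : ℝ)
    (f : ℝ → ℝ → EuclideanSpace ℝ (Fin n)) (φ : ℝ → ℝ → ℝ) (lam : ℝ → ℝ)
    (P : EuclideanSpace ℝ (Fin n))
    (hf : ContDiff ℝ (⊤ : ℕ∞) (Function.uncurry f))
    (hφ : ContDiff ℝ (⊤ : ℕ∞) (Function.uncurry φ))
    (hlam : ContDiff ℝ (⊤ : ℕ∞) lam)
    (hreg : ∀ t ∈ Ico (0 : ℝ) T, ∀ x ∈ Icc (0 : ℝ) 1, deriv (f t) x ≠ 0)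
    (hflow : ∀ t ∈ Ico (0 : ℝ) T, ∀ x ∈ Icc (0 : ℝ) 1,
      pT f t x
        = -nablaS (f t) (nablaS (f t) (kappa (f t))) x
          + lam t • kappa (f t) x
          - ((1 / 2 : ℝ) * ‖kappa (f t) x‖ ^ 2) • kappa (f t) x
          + φ t x • tau (f t) x)
    (hfix : ∀ t ∈ Ico (0 : ℝ) T, f t 1 = P)
    (hcurv : ∀ t ∈ Ico (0 : ℝ) T, kappa (f t) 1 = 0) :
    ∀ t ∈ Ioo (0 : ℝ) T,
      φ t 1 = 0 ∧ ∀ l : ℕ, nablaSIter (f t) (2 * l) (kappa (f t)) 1 = 0 := by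
  intro t ht
  have hIco : Ioo (0 : ℝ) T ⊆ Ico 0 T := Ioo_subset_Ico_self
  -- for `F = uncurry f` the hypotheses are definitionally those of the general statement
  obtain ⟨hφ0, hB⟩ := tangential_eq_zero_and_curvatureDeriv_two_mul_eq_zero_of_fixed_end
    (F := Function.uncurry f) hf hφ hlam (fun t ht x hx => hreg t (hIco ht) x hx)
    (fun t ht x hx => hflow t (hIco ht) x hx) (fun t ht => hfix t (hIco ht))
    (fun t ht => hcurv t (hIco ht)) t ht
  refine ⟨hφ0, fun l => ?_⟩
  rw [← curvatureDeriv_uncurry]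
  exact hB l

/-- At a fixed end-point of the elastic flow, all even-order normal derivatives of the
curvature vanish, and the tangential component vanishes. -/
theorem even_curvature_derivatives_vanish {n : ℕ} (hn : 2 ≤ n) (T : ℝ) (hT : 0 < T)
    (f : ℝ → ℝ → EuclideanSpace ℝ (Fin n)) (φ : ℝ → ℝ → ℝ) (lam : ℝ → ℝ)
    (P : EuclideanSpace ℝ (Fin n))
    (hf : ContDiff ℝ (⊤ : ℕ∞) (Function.uncurry f))
    (hφ : ContDiff ℝ (⊤ : ℕ∞) (Function.uncurry φ))
    (hlam : ContDiff ℝ (⊤ : ℕ∞) lam)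
    (hreg : ∀ t ∈ Ico (0 : ℝ) T, ∀ x ∈ Icc (0 : ℝ) 1, deriv (f t) x ≠ 0)
    (hflow : ∀ t ∈ Ico (0 : ℝ) T, ∀ x ∈ Icc (0 : ℝ) 1,
      pT f t x
        = -nablaS (f t) (nablaS (f t) (kappa (f t))) x
          + lam t • kappa (f t) x
          - ((1 / 2 : ℝ) * ‖kappa (f t) x‖ ^ 2) • kappa (f t) x
          + φ t x • tau (f t) x)
    (hfix : ∀ t ∈ Ico (0 : ℝ) T, f t 1 = P)
    (hcurv : ∀ t ∈ Ico (0 : ℝ) T, kappa (f t) 1 = 0) :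
    ∀ t ∈ Ioo (0 : ℝ) T,
      φ t 1 = 0 ∧ ∀ l : ℕ, nablaSIter (f t) (2 * l) (kappa (f t)) 1 = 0 :=
  even_curvature_derivatives_vanish_general T f φ lam P hf hφ hlam hreg hflow hfix hcurv
end
end

section
/- Let Γ = {f₁, f₂, f₃} be a smooth solution of the elastic network flow ∂ₜfᵢ = −∇ₛ²κᵢ − ½|κᵢ|²κᵢ + λᵢκᵢ + φᵢ ∂ₛfᵢ on (0,T) × [0,1], with λᵢ constant, subject to the boundary conditions fᵢ(t,1) = Pᵢ, κᵢ(t,0) = κᵢ(t,1) = 0, f₁(t,0) = f₂(t,0) = f₃(t,0), and Σᵢ₌₁³ (∇ₛκᵢ(t,0) − λᵢ ∂ₛfᵢ(t,0)) = 0 for all t ∈ (0,T). Then at the triple junction x = 0 one has ∇ₛ⁴κᵢ(t,0) = λᵢ ∇ₛ²κᵢ(t,0) + φᵢ(t,0) ∇ₛκᵢ(t,0) for every t ∈ (0,T) and i = 1,2,3. -/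
/-!
Since `κ(t, 0) = 0` for all `t`, the time derivative of `∂ₓτ = |∂ₓf| κ` vanishes at the
junction. By Schwarz this is `∂ₓ` of `∂ₜτ`, and `∂ₜτ = ∇ₛ(∂ₜf)`, so `∇ₛ²(∂ₜf) = 0` at `x = 0`.
Substituting the flow equation for `∂ₜf` and expanding `∇ₛ²` of the velocity (with
`∇ₛ(φτ) = φκ`), every term carrying a factor `κ`, `|κ|²` or `∂ₛ|κ|²` vanishes at the
junction, leaving `-∇ₛ⁴κ + λ∇ₛ²κ + φ∇ₛκ = 0`.
-/

open Set MeasureTheory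
open scoped RealInnerProductSpace

noncomputable section

open Filter Topology
open scoped ContDiff

section Calculus

variable {F : Type*} [NormedAddCommGroup F] [NormedSpace ℝ F]

theorem DifferentiableAt.deriv_slice_fst {G : ℝ × ℝ → F} {t x : ℝ}
    (h : DifferentiableAt ℝ G (t, x)) :
    deriv (fun s => G (s, x)) t = fderiv ℝ G (t, x) (1, 0) :=
  (h.hasFDerivAt.comp_hasDerivAt t ((hasDerivAt_id t).prodMk (hasDerivAt_const t x))).deriv

theorem DifferentiableAt.deriv_slice_snd {G : ℝ × ℝ → F} {t x : ℝ}
    (h : DifferentiableAt ℝ G (t, x)) :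
    deriv (fun y => G (t, y)) x = fderiv ℝ G (t, x) (0, 1) :=
  (h.hasFDerivAt.comp_hasDerivAt x ((hasDerivAt_const x t).prodMk (hasDerivAt_id x))).deriv

theorem ContDiffAt.deriv_slice_comm {G : ℝ × ℝ → F} {t x : ℝ} (hG : ContDiffAt ℝ 2 G (t, x)) :
    deriv (fun s => deriv (fun y => G (s, y)) x) t
      = deriv (fun y => deriv (fun s => G (s, y)) t) x := by
  have hdiff : ∀ᶠ q in 𝓝 (t, x), DifferentiableAt ℝ G q :=
    (hG.eventually (by simp)).mono fun q hq => hq.differentiableAt (by simp)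
  have hG' : DifferentiableAt ℝ (fderiv ℝ G) (t, x) :=
    (hG.fderiv_right (m := 1) le_rfl).differentiableAt one_ne_zero
  have h₁ : (fun s => deriv (fun y => G (s, y)) x) =ᶠ[𝓝 t] fun s => fderiv ℝ G (s, x) (0, 1) :=
    ((continuous_id.prodMk continuous_const).tendsto t).eventually hdiff |>.mono
      fun s hs => hs.deriv_slice_snd
  have h₂ : (fun y => deriv (fun s => G (s, y)) t) =ᶠ[𝓝 x] fun y => fderiv ℝ G (t, y) (1, 0) :=
    ((continuous_const.prodMk continuous_id).tendsto x).eventually hdiff |>.mono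
      fun y hy => hy.deriv_slice_fst
  have hsymm := (hG.isSymmSndFDerivAt (by simp)).eq (1, 0) (0, 1)
  rw [h₁.deriv_eq, h₂.deriv_eq,
    (hG'.clm_apply (differentiableAt_const (0, 1))).deriv_slice_fst,
    (hG'.clm_apply (differentiableAt_const (1, 0))).deriv_slice_snd,
    fderiv_clm_apply hG' (differentiableAt_const _), fderiv_clm_apply hG' (differentiableAt_const _)]
  simpa using hsymm

theorem deriv_eq_of_eqOn {g₁ g₂ : ℝ → F} {s : Set ℝ} {x : ℝ} (hs : UniqueDiffWithinAt ℝ s x)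
    (hx : x ∈ s) (h : EqOn g₁ g₂ s) (h₁ : DifferentiableAt ℝ g₁ x)
    (h₂ : DifferentiableAt ℝ g₂ x) : deriv g₁ x = deriv g₂ x := by
  rw [← h₁.derivWithin hs, ← h₂.derivWithin hs, derivWithin_congr h (h hx)]

theorem HasDerivAt.norm_inv_smul {E : Type*} [NormedAddCommGroup E] [InnerProductSpace ℝ E]
    {v : ℝ → E} {v' : E} {t : ℝ} (hv : HasDerivAt v v' t) (h0 : v t ≠ 0) :
    HasDerivAt (fun s => ‖v s‖⁻¹ • v s)
      (‖v t‖⁻¹ • (v' - ⟪v', ‖v t‖⁻¹ • v t⟫ • ‖v t‖⁻¹ • v t)) t := by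
  have hpos : 0 < ‖v t‖ := norm_pos_iff.2 h0
  have hnorm : HasDerivAt (fun s => ‖v s‖) (⟪v t, v'⟫ / ‖v t‖) t := by
    convert hv.norm_sq.sqrt (by positivity) using 1
    · simp [Real.sqrt_sq (norm_nonneg _)]
    · rw [Real.sqrt_sq (norm_nonneg _)]; field_simp
  have hinv : HasDerivAt (fun s => ‖v s‖⁻¹) (-(⟪v t, v'⟫ / ‖v t‖) / ‖v t‖ ^ 2) t :=
    hnorm.inv hpos.ne'
  convert hinv.fun_smul hv using 1
  rw [real_inner_smul_right, real_inner_comm]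
  match_scalars <;> field_simp

theorem ContDiffAt.deriv_infty {ψ : ℝ → F} {x : ℝ} (h : ContDiffAt ℝ ∞ ψ x) :
    ContDiffAt ℝ ∞ (deriv ψ) x :=
  (h.fderiv_right (by simp)).clm_apply contDiffAt_const

end Calculus

section ArcLength

variable {n : ℕ} {c : ℝ → EuclideanSpace ℝ (Fin n)} {x : ℝ}

theorem ContDiff.eventually_deriv_ne_zero (hc : ContDiff ℝ ∞ c) (hx : deriv c x ≠ 0) :
    ∀ᶠ y in 𝓝 x, deriv c y ≠ 0 :=
  (hc.continuous_deriv (by simp)).continuousAt.eventually_ne hx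

theorem ContDiffAt.sDeriv {F : Type*} [NormedAddCommGroup F] [NormedSpace ℝ F] {ψ : ℝ → F}
    (hc : ContDiff ℝ ∞ c) (hx : deriv c x ≠ 0) (hψ : ContDiffAt ℝ ∞ ψ x) :
    ContDiffAt ℝ ∞ (sDeriv c ψ) x :=
  (((hc.contDiffAt.deriv_infty).norm ℝ hx).inv (norm_ne_zero_iff.2 hx)).smul
    hψ.deriv_infty

theorem contDiffAt_tau (hc : ContDiff ℝ ∞ c) (hx : deriv c x ≠ 0) :
    ContDiffAt ℝ ∞ (tau c) x :=
  hc.contDiffAt.sDeriv hc hx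

theorem contDiffAt_kappa (hc : ContDiff ℝ ∞ c) (hx : deriv c x ≠ 0) :
    ContDiffAt ℝ ∞ (kappa c) x :=
  (contDiffAt_tau hc hx).sDeriv hc hx

theorem ContDiffAt.nablaS {ψ : ℝ → EuclideanSpace ℝ (Fin n)} (hc : ContDiff ℝ ∞ c)
    (hx : deriv c x ≠ 0) (hψ : ContDiffAt ℝ ∞ ψ x) : ContDiffAt ℝ ∞ (nablaS c ψ) x :=
  (hψ.sDeriv hc hx).sub (((hψ.sDeriv hc hx).inner ℝ (contDiffAt_tau hc hx)).smul
    (contDiffAt_tau hc hx))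

theorem inner_tau_self (hx : deriv c x ≠ 0) : ⟪tau c x, tau c x⟫ = 1 := by
  rw [real_inner_self_eq_norm_sq, tau, sDeriv, norm_smul, norm_inv, norm_norm,
    inv_mul_cancel₀ (norm_ne_zero_iff.2 hx), one_pow]

theorem deriv_tau (hx : deriv c x ≠ 0) : deriv (tau c) x = ‖deriv c x‖ • kappa c x := by
  rw [kappa, sDeriv, smul_smul, mul_inv_cancel₀ (norm_ne_zero_iff.2 hx), one_smul]

theorem inner_kappa_tau (hc : ContDiff ℝ ∞ c) (hx : deriv c x ≠ 0) :
    ⟪kappa c x, tau c x⟫ = 0 := by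
  have hτ : DifferentiableAt ℝ (tau c) x := (contDiffAt_tau hc hx).differentiableAt (by simp)
  have hconst : (fun y => ⟪tau c y, tau c y⟫) =ᶠ[𝓝 x] fun _ => (1 : ℝ) :=
    (hc.eventually_deriv_ne_zero hx).mono fun y hy => inner_tau_self hy
  have hderiv := hconst.deriv_eq
  rw [deriv_inner_apply ℝ hτ hτ, deriv_const, real_inner_comm (deriv (tau c) x)] at hderiv
  rw [kappa, sDeriv, real_inner_smul_left, show ⟪deriv (tau c) x, tau c x⟫ = 0 by linarith,
    mul_zero]

section NablaSRules

variable {ψ ψ₁ ψ₂ : ℝ → EuclideanSpace ℝ (Fin n)}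

theorem nablaS_congr_deriv (h : deriv ψ₁ x = deriv ψ₂ x) : nablaS c ψ₁ x = nablaS c ψ₂ x := by
  rw [nablaS, nablaS, sDeriv, sDeriv, h]

theorem nablaS_eq_zero_of_deriv_eq_zero (h : deriv ψ x = 0) : nablaS c ψ x = 0 := by
  simp [nablaS, sDeriv, h]

theorem nablaS_add (h₁ : DifferentiableAt ℝ ψ₁ x) (h₂ : DifferentiableAt ℝ ψ₂ x) :
    nablaS c (fun y => ψ₁ y + ψ₂ y) x = nablaS c ψ₁ x + nablaS c ψ₂ x := by
  simp only [nablaS, sDeriv, deriv_fun_add h₁ h₂, smul_add, inner_add_left, add_smul]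
  abel

theorem nablaS_sub (h₁ : DifferentiableAt ℝ ψ₁ x) (h₂ : DifferentiableAt ℝ ψ₂ x) :
    nablaS c (fun y => ψ₁ y - ψ₂ y) x = nablaS c ψ₁ x - nablaS c ψ₂ x := by
  simp only [nablaS, sDeriv, deriv_fun_sub h₁ h₂, smul_sub, inner_sub_left, sub_smul]
  abel

theorem nablaS_neg : nablaS c (fun y => -ψ y) x = -nablaS c ψ x := by
  simp only [nablaS, sDeriv, deriv.fun_neg, smul_neg, inner_neg_left, neg_smul]
  abel

theorem nablaS_const_smul (a : ℝ) (h : DifferentiableAt ℝ ψ x) :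
    nablaS c (fun y => a • ψ y) x = a • nablaS c ψ x := by
  simp only [nablaS, sDeriv, deriv_fun_const_smul a h, smul_sub, smul_smul,
    real_inner_smul_left]
  module

theorem nablaS_smul {a : ℝ → ℝ} (ha : DifferentiableAt ℝ a x) (hψ : DifferentiableAt ℝ ψ x) :
    nablaS c (fun y => a y • ψ y) x
      = sDeriv c a x • (ψ x - ⟪ψ x, tau c x⟫ • tau c x) + a x • nablaS c ψ x := by
  simp only [nablaS, sDeriv, deriv_fun_smul ha hψ, smul_eq_mul, smul_add, smul_sub, smul_smul,
    inner_add_left, real_inner_smul_left, add_smul]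
  module

end NablaSRules

theorem nablaS_tau (hc : ContDiff ℝ ∞ c) (hx : deriv c x ≠ 0) :
    nablaS c (tau c) x = kappa c x := by
  rw [nablaS, sDeriv, deriv_tau hx, smul_smul, inv_mul_cancel₀ (norm_ne_zero_iff.2 hx),
    one_smul, inner_kappa_tau hc hx, zero_smul, sub_zero]

end ArcLength

section ElasticVelocity

variable {n : ℕ} {c : ℝ → EuclideanSpace ℝ (Fin n)} {φ : ℝ → ℝ} {x : ℝ}

def elasticVelocity (c : ℝ → EuclideanSpace ℝ (Fin n)) (lam : ℝ) (φ : ℝ → ℝ) (x : ℝ) :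
    EuclideanSpace ℝ (Fin n) :=
  -nablaS c (nablaS c (kappa c)) x - ((1 / 2 : ℝ) * ‖kappa c x‖ ^ 2) • kappa c x
    + lam • kappa c x + φ x • tau c x

theorem contDiffAt_elasticVelocity (lam : ℝ) (hc : ContDiff ℝ ∞ c) (hφ : ContDiff ℝ ∞ φ)
    (hx : deriv c x ≠ 0) : ContDiffAt ℝ ∞ (elasticVelocity c lam φ) x := by
  have hκ := contDiffAt_kappa hc hx
  have hτ := contDiffAt_tau hc hx
  have h₂ := (hκ.nablaS hc hx).nablaS hc hx
  exact ((h₂.neg.sub ((contDiffAt_const.mul (hκ.norm_sq ℝ)).smul hκ)).add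
    (hκ.const_smul lam)).add (hφ.contDiffAt.smul hτ)

theorem nablaS_elasticVelocity (lam : ℝ) (hc : ContDiff ℝ ∞ c) (hφ : ContDiff ℝ ∞ φ)
    (hx : deriv c x ≠ 0) :
    nablaS c (elasticVelocity c lam φ) x
      = -nablaS c (nablaS c (nablaS c (kappa c))) x
        - (sDeriv c (fun y => (1 / 2 : ℝ) * ‖kappa c y‖ ^ 2) x • kappa c x
          + ((1 / 2 : ℝ) * ‖kappa c x‖ ^ 2) • nablaS c (kappa c) x)
        + lam • nablaS c (kappa c) x + φ x • kappa c x := by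
  have hκ := contDiffAt_kappa hc hx
  have hdκ : DifferentiableAt ℝ (kappa c) x := hκ.differentiableAt (by simp)
  have hd₂ : DifferentiableAt ℝ (nablaS c (nablaS c (kappa c))) x :=
    ((hκ.nablaS hc hx).nablaS hc hx).differentiableAt (by simp)
  have hdτ : DifferentiableAt ℝ (tau c) x := (contDiffAt_tau hc hx).differentiableAt (by simp)
  have hdb : DifferentiableAt ℝ (fun y => (1 / 2 : ℝ) * ‖kappa c y‖ ^ 2) x :=
    (hdκ.norm_sq ℝ).const_mul _
  have hdφ : DifferentiableAt ℝ φ x := hφ.differentiable (by simp) x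
  unfold elasticVelocity
  rw [nablaS_add (by fun_prop) (by fun_prop), nablaS_add (by fun_prop) (by fun_prop),
    nablaS_sub (by fun_prop) (by fun_prop), nablaS_neg, nablaS_const_smul lam hdκ,
    nablaS_smul hdb hdκ, nablaS_smul hdφ hdτ, nablaS_tau hc hx, inner_kappa_tau hc hx,
    inner_tau_self hx]
  simp

theorem nablaS_nablaS_elasticVelocity_of_kappa_eq_zero (lam : ℝ) (hc : ContDiff ℝ ∞ c)
    (hφ : ContDiff ℝ ∞ φ) (hx : deriv c x ≠ 0) (hκx : kappa c x = 0) :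
    nablaS c (nablaS c (elasticVelocity c lam φ)) x
      = -nablaSIter c 4 (kappa c) x + lam • nablaSIter c 2 (kappa c) x
        + φ x • nablaS c (kappa c) x := by
  set b : ℝ → ℝ := fun y => (1 / 2 : ℝ) * ‖kappa c y‖ ^ 2 with hb
  have hev : nablaS c (elasticVelocity c lam φ) =ᶠ[𝓝 x] fun y =>
      -nablaS c (nablaS c (nablaS c (kappa c))) y
        - (sDeriv c b y • kappa c y + b y • nablaS c (kappa c) y)
        + lam • nablaS c (kappa c) y + φ y • kappa c y :=
    (hc.eventually_deriv_ne_zero hx).mono fun y hy => nablaS_elasticVelocity lam hc hφ hy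
  have hκ := contDiffAt_kappa hc hx
  have hdκ : DifferentiableAt ℝ (kappa c) x := hκ.differentiableAt (by simp)
  have hd₁ : DifferentiableAt ℝ (nablaS c (kappa c)) x :=
    (hκ.nablaS hc hx).differentiableAt (by simp)
  have hd₃ : DifferentiableAt ℝ (nablaS c (nablaS c (nablaS c (kappa c)))) x :=
    (((hκ.nablaS hc hx).nablaS hc hx).nablaS hc hx).differentiableAt (by simp)
  have hcb : ContDiffAt ℝ ∞ b x := contDiffAt_const.mul (hκ.norm_sq ℝ)
  have hdb : DifferentiableAt ℝ b x := hcb.differentiableAt (by simp)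
  have hdsb : DifferentiableAt ℝ (sDeriv c b) x := (hcb.sDeriv hc hx).differentiableAt (by simp)
  have hdφ : DifferentiableAt ℝ φ x := hφ.differentiable (by simp) x
  have hbx : b x = 0 := by simp [hb, hκx]
  have hsbx : sDeriv c b x = 0 := by
    rw [sDeriv, (hdκ.hasDerivAt.norm_sq.const_mul (1 / 2 : ℝ)).deriv, hκx]
    simp
  rw [nablaS_congr_deriv hev.deriv_eq, nablaS_add (by fun_prop) (by fun_prop),
    nablaS_add (by fun_prop) (by fun_prop), nablaS_sub (by fun_prop) (by fun_prop), nablaS_neg,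
    nablaS_add (by fun_prop) (by fun_prop), nablaS_smul hdsb hdκ, nablaS_smul hdb hd₁,
    nablaS_const_smul lam hd₁, nablaS_smul hdφ hdκ]
  simp only [hκx, hbx, hsbx, inner_zero_left, zero_smul, sub_self, smul_zero, add_zero,
    sub_zero, zero_add]
  rfl

end ElasticVelocity

section CurveFamily

variable {n : ℕ} {g : ℝ → ℝ → EuclideanSpace ℝ (Fin n)} {t x : ℝ}

theorem contDiff_deriv_slice (hg : ContDiff ℝ ∞ (Function.uncurry g)) :
    ContDiff ℝ ∞ fun p : ℝ × ℝ => deriv (g p.1) p.2 := by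
  have h : (fun p : ℝ × ℝ => deriv (g p.1) p.2)
      = fun p => fderiv ℝ (Function.uncurry g) p (0, 1) :=
    funext fun p => (hg.differentiable (by simp) (p.1, p.2)).deriv_slice_snd
  rw [h]
  exact (hg.fderiv_right (by simp)).clm_apply contDiff_const

theorem contDiff_pT (hg : ContDiff ℝ ∞ (Function.uncurry g)) (t : ℝ) :
    ContDiff ℝ ∞ (pT g t) := by
  have h : pT g t = fun y => fderiv ℝ (Function.uncurry g) (t, y) (1, 0) :=
    funext fun y => (hg.differentiable (by simp) (t, y)).deriv_slice_fst
  rw [h]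
  exact ((hg.fderiv_right (by simp)).clm_apply contDiff_const).comp
    (contDiff_const.prodMk contDiff_id)

theorem hasDerivAt_tau_slice (hg : ContDiff ℝ ∞ (Function.uncurry g))
    (hx : deriv (g t) x ≠ 0) :
    HasDerivAt (fun s => tau (g s) x) (nablaS (g t) (pT g t) x) t := by
  have hd : DifferentiableAt ℝ (fun s => deriv (g s) x) t :=
    ((contDiff_deriv_slice hg).comp (contDiff_id.prodMk contDiff_const)).differentiable
      (by simp) t
  have hv : HasDerivAt (fun s => deriv (g s) x) (deriv (pT g t) x) t := by
    refine hd.hasDerivAt.congr_deriv ?_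
    exact ((hg.contDiffAt (x := (t, x))).of_le (by norm_cast)).deriv_slice_comm
  refine (hv.norm_inv_smul hx).congr_deriv ?_
  rw [nablaS, sDeriv, tau, sDeriv, smul_sub, smul_smul, real_inner_smul_left]

theorem deriv_deriv_tau_slice_eq_zero (hg : ContDiff ℝ ∞ (Function.uncurry g))
    (hx : deriv (g t) x ≠ 0) (hκ : ∀ᶠ s in 𝓝 t, kappa (g s) x = 0) :
    deriv (fun y => deriv (fun s => tau (g s) y) t) x = 0 := by
  have hD := contDiff_deriv_slice hg
  have hG : ContDiffAt ℝ 2 (fun p : ℝ × ℝ => tau (g p.1) p.2) (t, x) :=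
    (((hD.contDiffAt.norm ℝ hx).inv (norm_ne_zero_iff.2 hx)).smul hD.contDiffAt).of_le
      (by norm_cast)
  have hreg : ∀ᶠ s in 𝓝 t, deriv (g s) x ≠ 0 :=
    (hD.continuous.comp (continuous_id.prodMk continuous_const)).continuousAt.eventually_ne hx
  have hzero : (fun s => deriv (tau (g s)) x) =ᶠ[𝓝 t] fun _ => 0 :=
    (hreg.and hκ).mono fun s ⟨hs, hκs⟩ => by simp only [deriv_tau hs, hκs, smul_zero]
  exact hG.deriv_slice_comm.symm.trans (hzero.deriv_eq.trans (deriv_const _ _))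

end CurveFamily

theorem nablaSIter_four_kappa_of_elasticVelocity {n : ℕ} {g : ℝ → ℝ → EuclideanSpace ℝ (Fin n)}
    {φ : ℝ → ℝ} {lam t x₀ : ℝ} {s : Set ℝ} (hg : ContDiff ℝ ∞ (Function.uncurry g))
    (hφ : ContDiff ℝ ∞ φ) (hs : UniqueDiffOn ℝ s) (hx₀ : x₀ ∈ s)
    (hreg : ∀ x ∈ s, deriv (g t) x ≠ 0)
    (hflow : EqOn (pT g t) (elasticVelocity (g t) lam φ) s)
    (hκ : ∀ᶠ r in 𝓝 t, kappa (g r) x₀ = 0) :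
    nablaSIter (g t) 4 (kappa (g t)) x₀
      = lam • nablaSIter (g t) 2 (kappa (g t)) x₀ + φ x₀ • nablaS (g t) (kappa (g t)) x₀ := by
  have hgt : ContDiff ℝ ∞ (g t) := hg.comp (contDiff_const.prodMk contDiff_id)
  have hV : ∀ x ∈ s, ContDiffAt ℝ ∞ (elasticVelocity (g t) lam φ) x := fun x hx =>
    contDiffAt_elasticVelocity lam hgt hφ (hreg x hx)
  have hreg₀ := hreg x₀ hx₀
  have hderiv_pT : deriv (nablaS (g t) (pT g t)) x₀ = 0 := by
    have h : (fun y => deriv (fun r => tau (g r) y) t) =ᶠ[𝓝 x₀] nablaS (g t) (pT g t) :=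
      (hgt.eventually_deriv_ne_zero hreg₀).mono fun y hy => (hasDerivAt_tau_slice hg hy).deriv
    rw [← h.deriv_eq]
    exact deriv_deriv_tau_slice_eq_zero hg hreg₀ hκ
  have hnablaS : EqOn (nablaS (g t) (pT g t)) (nablaS (g t) (elasticVelocity (g t) lam φ)) s :=
    fun x hx => nablaS_congr_deriv <| deriv_eq_of_eqOn (hs x hx) hx hflow
      ((contDiff_pT hg t).differentiable (by simp) x) ((hV x hx).differentiableAt (by simp))
  have hderiv_V : deriv (nablaS (g t) (elasticVelocity (g t) lam φ)) x₀ = 0 := by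
    rw [← deriv_eq_of_eqOn (hs x₀ hx₀) hx₀ hnablaS
      (((contDiff_pT hg t).contDiffAt.nablaS hgt hreg₀).differentiableAt (by simp))
      (((hV x₀ hx₀).nablaS hgt hreg₀).differentiableAt (by simp))]
    exact hderiv_pT
  have h := nablaS_nablaS_elasticVelocity_of_kappa_eq_zero lam hgt hφ hreg₀ hκ.self_of_nhds
  rw [nablaS_eq_zero_of_deriv_eq_zero hderiv_V] at h
  linear_combination (norm := module) h

theorem fourth_derivative_at_junction_general {n : ℕ} (T : ℝ)
    (lam : Fin 3 → ℝ)
    (f : Fin 3 → ℝ → ℝ → EuclideanSpace ℝ (Fin n)) (φ : Fin 3 → ℝ → ℝ → ℝ)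
    (hf : ∀ i, ContDiff ℝ (⊤ : ℕ∞) (Function.uncurry (f i)))
    (hφ : ∀ i, ContDiff ℝ (⊤ : ℕ∞) (Function.uncurry (φ i)))
    (hreg : ∀ i, ∀ t ∈ Ioo (0 : ℝ) T, ∀ x ∈ Icc (0 : ℝ) 1, deriv (f i t) x ≠ 0)
    (hflow : ∀ i, ∀ t ∈ Ioo (0 : ℝ) T, ∀ x ∈ Icc (0 : ℝ) 1,
      pT (f i) t x
        = -nablaS (f i t) (nablaS (f i t) (kappa (f i t))) x
          - ((1 / 2 : ℝ) * ‖kappa (f i t) x‖ ^ 2) • kappa (f i t) x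
          + lam i • kappa (f i t) x
          + φ i t x • tau (f i t) x)
    (hcurv : ∀ i, ∀ t ∈ Ioo (0 : ℝ) T,
      kappa (f i t) 0 = 0 ∧ kappa (f i t) 1 = 0) :
    ∀ t ∈ Ioo (0 : ℝ) T, ∀ i : Fin 3,
      nablaSIter (f i t) 4 (kappa (f i t)) 0
        = lam i • nablaSIter (f i t) 2 (kappa (f i t)) 0
          + φ i t 0 • nablaS (f i t) (kappa (f i t)) 0 := by
  intro t ht i
  have hκ : ∀ᶠ r in 𝓝 t, kappa (f i r) 0 = 0 :=
    eventually_of_mem (Ioo_mem_nhds ht.1 ht.2) fun r hr => (hcurv i r hr).1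
  exact nablaSIter_four_kappa_of_elasticVelocity (hf i)
    ((hφ i).comp (contDiff_const.prodMk contDiff_id)) (uniqueDiffOn_Icc zero_lt_one)
    (left_mem_Icc.2 zero_le_one) (hreg i t ht) (fun x hx => hflow i t ht x hx) hκ

/-- At the triple junction of the elastic network flow:
`∇ₛ⁴κᵢ(t,0) = λᵢ ∇ₛ²κᵢ(t,0) + φᵢ(t,0) ∇ₛκᵢ(t,0)`. -/
theorem fourth_derivative_at_junction {n : ℕ} (hn : 2 ≤ n) (T : ℝ) (hT : 0 < T)
    (P : Fin 3 → EuclideanSpace ℝ (Fin n)) (hP : Function.Injective P)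
    (lam : Fin 3 → ℝ)
    (f : Fin 3 → ℝ → ℝ → EuclideanSpace ℝ (Fin n)) (φ : Fin 3 → ℝ → ℝ → ℝ)
    (hf : ∀ i, ContDiff ℝ (⊤ : ℕ∞) (Function.uncurry (f i)))
    (hφ : ∀ i, ContDiff ℝ (⊤ : ℕ∞) (Function.uncurry (φ i)))
    (hreg : ∀ i, ∀ t ∈ Ioo (0 : ℝ) T, ∀ x ∈ Icc (0 : ℝ) 1, deriv (f i t) x ≠ 0)
    (hflow : ∀ i, ∀ t ∈ Ioo (0 : ℝ) T, ∀ x ∈ Icc (0 : ℝ) 1,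
      pT (f i) t x
        = -nablaS (f i t) (nablaS (f i t) (kappa (f i t))) x
          - ((1 / 2 : ℝ) * ‖kappa (f i t) x‖ ^ 2) • kappa (f i t) x
          + lam i • kappa (f i t) x
          + φ i t x • tau (f i t) x)
    (hfix : ∀ i, ∀ t ∈ Ioo (0 : ℝ) T, f i t 1 = P i)
    (hcurv : ∀ i, ∀ t ∈ Ioo (0 : ℝ) T,
      kappa (f i t) 0 = 0 ∧ kappa (f i t) 1 = 0)
    (hconc : ∀ i j, ∀ t ∈ Ioo (0 : ℝ) T, f i t 0 = f j t 0)
    (hnat : ∀ t ∈ Ioo (0 : ℝ) T,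
      ∑ i : Fin 3, (nablaS (f i t) (kappa (f i t)) 0 - lam i • tau (f i t) 0) = 0) :
    ∀ t ∈ Ioo (0 : ℝ) T, ∀ i : Fin 3,
      nablaSIter (f i t) 4 (kappa (f i t)) 0
        = lam i • nablaSIter (f i t) 2 (kappa (f i t)) 0
          + φ i t 0 • nablaS (f i t) (kappa (f i t)) 0 :=
  fourth_derivative_at_junction_general T lam f φ hf hφ hreg hflow hcurv
end
end

section
/- Let T₁, T₂, T₃ ∈ ℝⁿ be unit vectors and let M be the symmetric 3×3 real matrix with diagonal entries M_{ii} = 2 and off-diagonal entries M_{ij} = −⟨T_i, T_j⟩ for i ≠ j. Then det M = 8 − 2⟨T₂,T₃⟩² − 2⟨T₁,T₂⟩² − 2⟨T₁,T₃⟩² − 2⟨T₁,T₂⟩⟨T₂,T₃⟩⟨T₃,T₁⟩ ≥ 2(1 − ⟨T₁,T₂⟩⟨T₂,T₃⟩⟨T₃,T₁⟩) ≥ 0, with det M = 0 if and only if T₁ = T₂ = T₃, or for some i ∈ {1,2,3} (indices mod 3) T_i = T_{i+1} and T_{i+2} = −T_i. In particular, if the span of {T₁, T₂, T₃} has dimension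 at least 2, then det M > 0 and M is positive definite. -/
open Matrix
open scoped RealInnerProductSpace

lemma aux_le (a b c : ℝ) (ha : a^2 ≤ 1) (hb : b^2 ≤ 1) (hc : c^2 ≤ 1) :
    a*b*c ≤ 1 := by
  nlinarith [sq_nonneg (a*b - c), sq_nonneg b, mul_nonneg (sub_nonneg.2 ha) (sq_nonneg b)]

lemma aux_cases (a b c : ℝ) (ha : a^2 ≤ 1) (hb : b^2 ≤ 1) (hc : c^2 ≤ 1)
    (h : 8 - 2*b^2 - 2*a^2 - 2*c^2 - 2*a*b*c = 0) :
    (a = 1 ∨ a = -1) ∧ (b = 1 ∨ b = -1) ∧ (c = 1 ∨ c = -1) ∧ a*b*c = 1 := by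
  have h1 : a*b*c = 1 := le_antisymm (aux_le a b c ha hb hc) (by nlinarith)
  have ea : a^2 = 1 := by nlinarith
  have eb : b^2 = 1 := by nlinarith
  have ec : c^2 = 1 := by nlinarith
  exact ⟨mul_self_eq_one_iff.mp (by nlinarith), mul_self_eq_one_iff.mp (by nlinarith),
    mul_self_eq_one_iff.mp (by nlinarith), h1⟩

lemma aux_Q (a b c x0 x1 x2 : ℝ) (ha : a^2 ≤ 1) (hb : b^2 ≤ 1) (hc : c^2 ≤ 1)
    (hd : 0 < 8 - 2*b^2 - 2*a^2 - 2*c^2 - 2*a*b*c)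
    (hx : x0 ≠ 0 ∨ x1 ≠ 0 ∨ x2 ≠ 0) :
    0 < 2*(x0^2+x1^2+x2^2) - 2*a*x0*x1 - 2*b*x1*x2 - 2*c*x0*x2 := by
  rcases hx with h|h|h
  · have hb4 : (0:ℝ) < 4 - b^2 := by nlinarith
    nlinarith [sq_nonneg (2*x2 - b*x1 - c*x0), sq_nonneg ((4-b^2)*x1 - (2*a+b*c)*x0),
      mul_pos hd (pow_pos (abs_pos.mpr h) 2), sq_abs x0,
      mul_nonneg hb4.le (sq_nonneg (2*x2 - b*x1 - c*x0))]
  · have hc4 : (0:ℝ) < 4 - c^2 := by nlinarith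
    nlinarith [sq_nonneg (2*x0 - c*x2 - a*x1), sq_nonneg ((4-c^2)*x2 - (2*b+c*a)*x1),
      mul_pos hd (pow_pos (abs_pos.mpr h) 2), sq_abs x1,
      mul_nonneg hc4.le (sq_nonneg (2*x0 - c*x2 - a*x1))]
  · have ha4 : (0:ℝ) < 4 - a^2 := by nlinarith
    nlinarith [sq_nonneg (2*x0 - a*x1 - c*x2), sq_nonneg ((4-a^2)*x1 - (2*b+a*c)*x2),
      mul_pos hd (pow_pos (abs_pos.mpr h) 2), sq_abs x2,
      mul_nonneg ha4.le (sq_nonneg (2*x0 - a*x1 - c*x2))]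

/-- The Gram-type matrix at the triple junction: determinant formula, lower bounds,
characterization of degeneracy, and positive definiteness when the tangents span a
space of dimension at least two. -/
theorem junction_matrix_positive_definite (n : ℕ) (hn : 2 ≤ n)
    (T : Fin 3 → EuclideanSpace ℝ (Fin n)) (hT : ∀ i, ‖T i‖ = 1)
    (M : Matrix (Fin 3) (Fin 3) ℝ)
    (hMdiag : ∀ i, M i i = 2)
    (hMoff : ∀ i j, i ≠ j → M i j = -⟪T i, T j⟫) :
    M.det = 8 - 2 * ⟪T 1, T 2⟫ ^ 2 - 2 * ⟪T 0, T 1⟫ ^ 2 - 2 * ⟪T 0, T 2⟫ ^ 2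
        - 2 * ⟪T 0, T 1⟫ * ⟪T 1, T 2⟫ * ⟪T 2, T 0⟫
    ∧ 2 * (1 - ⟪T 0, T 1⟫ * ⟪T 1, T 2⟫ * ⟪T 2, T 0⟫) ≤ M.det
    ∧ 0 ≤ 2 * (1 - ⟪T 0, T 1⟫ * ⟪T 1, T 2⟫ * ⟪T 2, T 0⟫)
    ∧ (M.det = 0 ↔
        (T 0 = T 1 ∧ T 1 = T 2)
          ∨ ∃ i : Fin 3, T i = T (i + 1) ∧ T (i + 2) = -T i)
    ∧ (2 ≤ Module.finrank ℝ (Submodule.span ℝ (Set.range T)) →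
        0 < M.det ∧ ∀ x : Fin 3 → ℝ, x ≠ 0 → 0 < x ⬝ᵥ M.mulVec x) := by
  -- abbreviations
  have hbound : ∀ i j : Fin 3, ⟪T i, T j⟫ ^ 2 ≤ 1 := by
    intro i j
    have h := abs_real_inner_le_norm (T i) (T j)
    rw [hT i, hT j] at h
    nlinarith [sq_abs (⟪T i, T j⟫ : ℝ), abs_nonneg (⟪T i, T j⟫ : ℝ)]
  have hcomm : ∀ i j : Fin 3, ⟪T i, T j⟫ = ⟪T j, T i⟫ := fun i j => real_inner_comm _ _
  have hself : ∀ i : Fin 3, ⟪T i, T i⟫ = 1 := by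
    intro i; rw [real_inner_self_eq_norm_sq, hT i]; norm_num
  have heq1 : ∀ i j : Fin 3, ⟪T i, T j⟫ = 1 → T i = T j := fun i j h =>
    (inner_eq_one_iff_of_norm_eq_one (hT i) (hT j)).mp (by exact_mod_cast h)
  have hneg1 : ∀ i j : Fin 3, ⟪T i, T j⟫ = -1 → T j = -T i := by
    intro i j h
    have h' : ⟪T i, -T j⟫ = (1:ℝ) := by rw [inner_neg_right, h]; norm_num
    have := (inner_eq_one_iff_of_norm_eq_one (𝕜 := ℝ) (hT i) (by rw [norm_neg]; exact hT j)).mp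
      (by exact_mod_cast h')
    rw [this, neg_neg]
  have hinner_eq : ∀ i j : Fin 3, T i = T j → ⟪T i, T j⟫ = 1 := by
    intro i j h; rw [h, hself]
  have hinner_neg : ∀ i j : Fin 3, T j = -T i → ⟪T i, T j⟫ = -1 := by
    intro i j h; rw [h, inner_neg_right, hself]
  set a : ℝ := ⟪T 0, T 1⟫ with hadef
  set b : ℝ := ⟪T 1, T 2⟫ with hbdef
  set c : ℝ := ⟪T 2, T 0⟫ with hcdef
  have ha : a^2 ≤ 1 := hbound 0 1
  have hb : b^2 ≤ 1 := hbound 1 2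
  have hc : c^2 ≤ 1 := hbound 2 0
  have h02 : (⟪T 0, T 2⟫ : ℝ) = c := hcomm 0 2
  -- determinant formula
  have hdet : M.det = 8 - 2*b^2 - 2*a^2 - 2*c^2 - 2*a*b*c := by
    rw [Matrix.det_fin_three, hMdiag, hMdiag, hMdiag,
      hMoff 0 1 (by decide), hMoff 0 2 (by decide), hMoff 1 0 (by decide),
      hMoff 1 2 (by decide), hMoff 2 0 (by decide), hMoff 2 1 (by decide),
      hcomm 1 0, hcomm 2 1, h02, ← hadef, ← hbdef, ← hcdef]
    ring
  have hdetgoal : M.det = 8 - 2 * b ^ 2 - 2 * a ^ 2 - 2 * ⟪T 0, T 2⟫ ^ 2 - 2 * a * b * c := by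
    rw [h02, hdet]
  have hle : 2 * (1 - a*b*c) ≤ M.det := by rw [hdet]; nlinarith
  have habc_le : a*b*c ≤ 1 := aux_le a b c ha hb hc
  have hnonneg : (0:ℝ) ≤ 2 * (1 - a*b*c) := by linarith
  -- characterization of det = 0
  have hiff : M.det = 0 ↔
      (T 0 = T 1 ∧ T 1 = T 2) ∨ ∃ i : Fin 3, T i = T (i + 1) ∧ T (i + 2) = -T i := by
    constructor
    · intro h0
      rw [hdet] at h0
      obtain ⟨hA, hB, hC, hP⟩ := aux_cases a b c ha hb hc h0
      rcases hA with hA | hA <;> rcases hB with hB | hB <;> rcases hC with hC | hC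
      · exact Or.inl ⟨heq1 0 1 hA, heq1 1 2 hB⟩
      · rw [hA, hB, hC] at hP; norm_num at hP
      · rw [hA, hB, hC] at hP; norm_num at hP
      · -- a=1, b=-1, c=-1 : i = 0
        refine Or.inr ⟨0, ?_, ?_⟩
        · show T 0 = T 1; exact heq1 0 1 hA
        · show T 2 = -T 0
          have h12 : T 2 = -T 1 := hneg1 1 2 hB
          rw [h12, heq1 0 1 hA]
      · rw [hA, hB, hC] at hP; norm_num at hP
      · -- a=-1, b=1, c=-1 : i = 1
        refine Or.inr ⟨1, ?_, ?_⟩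
        · show T 1 = T 2; exact heq1 1 2 hB
        · show T 0 = -T 1
          exact hneg1 1 0 (by rw [← hcomm 0 1, ← hadef, hA])
      · -- a=-1, b=-1, c=1 : i = 2
        refine Or.inr ⟨2, ?_, ?_⟩
        · show T 2 = T 0; exact heq1 2 0 hC
        · show T 1 = -T 2
          exact hneg1 2 1 (by rw [← hcomm 1 2, ← hbdef, hB])
      · rw [hA, hB, hC] at hP; norm_num at hP
    · rintro (⟨h01, h12⟩ | ⟨i, h1, h2⟩)
      · have ea : a = 1 := hinner_eq 0 1 h01
        have eb : b = 1 := hinner_eq 1 2 h12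
        have ec : c = 1 := hinner_eq 2 0 (by rw [← h12, ← h01])
        rw [hdet, ea, eb, ec]; norm_num
      · fin_cases i
        · have h1' : T 0 = T 1 := h1
          have h2' : T 2 = -T 0 := h2
          have ea : a = 1 := hinner_eq 0 1 h1'
          have eb : b = -1 := hinner_neg 1 2 (by rw [h2', h1'])
          have ec : c = -1 := by rw [hcdef, hcomm 2 0, hinner_neg 0 2 h2']
          rw [hdet, ea, eb, ec]; norm_num
        · have h1' : T 1 = T 2 := h1
          have h2' : T 0 = -T 1 := h2
          have ea : a = -1 := by rw [hadef, hcomm 0 1, hinner_neg 1 0 h2']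
          have eb : b = 1 := hinner_eq 1 2 h1'
          have ec : c = -1 := hinner_neg 2 0 (by rw [h2', h1'])
          rw [hdet, ea, eb, ec]; norm_num
        · have h1' : T 2 = T 0 := h1
          have h2' : T 1 = -T 2 := h2
          have ea : a = -1 := hinner_neg 0 1 (by rw [h2', h1'])
          have eb : b = -1 := by rw [hbdef, hcomm 1 2, hinner_neg 2 1 h2']
          have ec : c = 1 := hinner_eq 2 0 h1'
          rw [hdet, ea, eb, ec]; norm_num
  refine ⟨hdetgoal, hle, hnonneg, hiff, ?_⟩
  -- positive definiteness under the rank assumption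
  intro hrank
  have hT0ne : T 0 ≠ 0 := by
    intro h; have := hT 0; rw [h, norm_zero] at this; norm_num at this
  have hdetne : M.det ≠ 0 := by
    intro h0
    have hsub : Set.range T ⊆ (Submodule.span ℝ {T 0} : Submodule ℝ _) := by
      rintro _ ⟨i, rfl⟩
      have hmem : T 0 ∈ Submodule.span ℝ {T 0} := Submodule.mem_span_singleton_self _
      have hnegmem : -T 0 ∈ Submodule.span ℝ {T 0} := Submodule.neg_mem _ hmem
      rcases hiff.mp h0 with ⟨h01, h12⟩ | ⟨j, h1, h2⟩
      · fin_cases i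
        · exact hmem
        · show T 1 ∈ Submodule.span ℝ {T 0}
          rw [← h01]; exact hmem
        · show T 2 ∈ Submodule.span ℝ {T 0}
          rw [← h12, ← h01]; exact hmem
      · fin_cases j
        · have h1' : T 0 = T 1 := h1
          have h2' : T 2 = -T 0 := h2
          fin_cases i
          · exact hmem
          · show T 1 ∈ Submodule.span ℝ {T 0}
            rw [← h1']; exact hmem
          · show T 2 ∈ Submodule.span ℝ {T 0}
            rw [h2']; exact hnegmem
        · have h1' : T 1 = T 2 := h1
          have h2' : T 0 = -T 1 := h2
          have e1 : T 1 = -T 0 := by rw [h2', neg_neg]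
          fin_cases i
          · exact hmem
          · show T 1 ∈ Submodule.span ℝ {T 0}
            rw [e1]; exact hnegmem
          · show T 2 ∈ Submodule.span ℝ {T 0}
            rw [← h1', e1]; exact hnegmem
        · have h1' : T 2 = T 0 := h1
          have h2' : T 1 = -T 2 := h2
          fin_cases i
          · exact hmem
          · show T 1 ∈ Submodule.span ℝ {T 0}
            rw [h2', h1']; exact hnegmem
          · show T 2 ∈ Submodule.span ℝ {T 0}
            rw [h1']; exact hmem
    have hle' : Submodule.span ℝ (Set.range T) ≤ Submodule.span ℝ {T 0} :=
      Submodule.span_le.mpr hsub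
    have h1 : Module.finrank ℝ (Submodule.span ℝ (Set.range T)) ≤
        Module.finrank ℝ (Submodule.span ℝ {T 0}) := Submodule.finrank_mono hle'
    have h2 : Module.finrank ℝ (Submodule.span ℝ ({T 0} : Set (EuclideanSpace ℝ (Fin n)))) = 1 :=
      finrank_span_singleton hT0ne
    omega
  have hdetpos : 0 < M.det := lt_of_le_of_ne (by linarith) (Ne.symm hdetne)
  refine ⟨hdetpos, ?_⟩
  intro x hx
  have hx' : x 0 ≠ 0 ∨ x 1 ≠ 0 ∨ x 2 ≠ 0 := by
    by_contra h
    push_neg at h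
    exact hx (funext fun i => by fin_cases i <;> simp [h.1, h.2.1, h.2.2])
  have hQ : x ⬝ᵥ M.mulVec x =
      2*((x 0)^2+(x 1)^2+(x 2)^2) - 2*a*(x 0)*(x 1) - 2*b*(x 1)*(x 2) - 2*c*(x 0)*(x 2) := by
    simp only [dotProduct, Matrix.mulVec, Fin.sum_univ_three]
    rw [hMdiag 0, hMdiag 1, hMdiag 2,
      hMoff 0 1 (by decide), hMoff 0 2 (by decide), hMoff 1 0 (by decide),
      hMoff 1 2 (by decide), hMoff 2 0 (by decide), hMoff 2 1 (by decide),
      hcomm 1 0, hcomm 2 1, h02, ← hadef, ← hbdef, ← hcdef]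
    ring
  rw [hQ]
  exact aux_Q a b c (x 0) (x 1) (x 2) ha hb hc (by rw [← hdet]; exact hdetpos) hx'
end
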